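/- arXiv:1203.6736 — 8 statements merged into one kernel-verified Lean document; each statement's English description precedes it below -/
import Mathlib

section
/- The Eulerian polynomials of type B, defined by sum_{k≥0} (2k+1)^n t^k = B_n(t)/(1-t)^{n+1}, can be written as B_n(t) = sum_{k=0}^{⌊n/2⌋} b_{n,k} t^k (1+t)^{n-2k} with positive integers b_{n,k} satisfying b_{n,k} = (2k+1)b_{n-1,k} + 4(n+1-2k)b_{n-1,k-1}, with b_{1,0} = 1 and b_{n,k} = 0 for k < 0 or k > ⌊n/2⌋. -/
/-!
Both `B_n` and `∑ₖ b_{n,k} t^k (1+t)^{n-2k}` satisfy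
`P_{n+1} = (1 + (2n+1) t) P_n + 2t(1-t) P_n'` with `P_0 = 1`. For `B_n` this is the operator
`1 + 2t d/dt`, which maps `∑ (2k+1)^n t^k` to `∑ (2k+1)^{n+1} t^k`, conjugated by `(1-t)^{n+1}`.
On the gamma basis the operator sends `t^k (1+t)^{n-2k}` to
`(2k+1) t^k (1+t)^{n+1-2k} + 4(n-2k) t^{k+1} (1+t)^{n-1-2k}`, which is exactly the recursion for
`b_{n,k}`; its coefficients are positive in the range `0 ≤ 2k ≤ n+1`, whence `b_{n,k} > 0`.
-/

open Polynomial Finset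

def gammaCoeffB : ℕ → ℤ → ℤ
  | 0, k => if k = 0 then 1 else 0
  | n + 1, k =>
    if k < 0 then 0 else (2 * k + 1) * gammaCoeffB n k + 4 * ((n : ℤ) + 2 - 2 * k) * gammaCoeffB n (k - 1)

theorem gammaCoeffB_succ (n : ℕ) {k : ℤ} (hk : 0 ≤ k) :
    gammaCoeffB (n + 1) k =
      (2 * k + 1) * gammaCoeffB n k + 4 * ((n : ℤ) + 2 - 2 * k) * gammaCoeffB n (k - 1) := by
  simp [gammaCoeffB, hk.not_gt]

theorem gammaCoeffB_of_neg (n : ℕ) {k : ℤ} (hk : k < 0) : gammaCoeffB n k = 0 := by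
  cases n <;> simp [gammaCoeffB, hk, hk.ne]

theorem gammaCoeffB_eq_zero {n : ℕ} {k : ℤ} (hk : k < 0 ∨ ((n / 2 : ℕ) : ℤ) < k) :
    gammaCoeffB n k = 0 := by
  induction n generalizing k with
  | zero => rcases hk with hk | hk <;> simp [gammaCoeffB] <;> omega
  | succ n ih =>
    rcases hk with hk | hk
    · exact gammaCoeffB_of_neg _ hk
    rw [gammaCoeffB_succ n (by omega), ih (Or.inr (by omega))]
    rcases lt_or_ge ((n / 2 : ℕ) : ℤ) (k - 1) with h | h
    · rw [ih (Or.inr h)]; ring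
    · -- here `n + 2 = 2 * k`
      have : (n : ℤ) + 2 - 2 * k = 0 := by omega
      rw [this]; ring

theorem gammaCoeffB_pos {n : ℕ} {k : ℤ} (hk₀ : 0 ≤ k) (hkn : k ≤ ((n / 2 : ℕ) : ℤ)) :
    0 < gammaCoeffB n k := by
  induction n generalizing k with
  | zero => simp [gammaCoeffB, show k = 0 by omega]
  | succ n ih =>
    have nonneg (j : ℤ) : 0 ≤ gammaCoeffB n j := by
      by_cases hj : 0 ≤ j ∧ j ≤ ((n / 2 : ℕ) : ℤ)
      · exact (ih hj.1 hj.2).le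
      · exact (gammaCoeffB_eq_zero (by omega)).ge
    have hcoeff : 0 < (n : ℤ) + 2 - 2 * k := by omega
    have h₀ := nonneg k
    have h₁ := nonneg (k - 1)
    rw [gammaCoeffB_succ n hk₀]
    rcases le_or_gt k ((n / 2 : ℕ) : ℤ) with h | h
    · have := ih hk₀ h
      positivity
    · have := ih (by omega) (by omega : k - 1 ≤ ((n / 2 : ℕ) : ℤ))
      positivity

theorem eulerianB_step_X_pow_mul_one_add_X_pow {R : Type*} [CommRing R] {n k : ℕ} (hk : 2 * k ≤ n) :
    (1 + (2 * (n : R[X]) + 1) * X) * (X ^ k * (1 + X) ^ (n - 2 * k)) +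
        2 * X * (1 - X) * derivative (X ^ k * (1 + X) ^ (n - 2 * k) : R[X]) =
      (2 * (k : R[X]) + 1) * (X ^ k * (1 + X) ^ (n + 1 - 2 * k)) +
        4 * ((n : R[X]) - 2 * (k : R[X])) * (X ^ (k + 1) * (1 + X) ^ (n + 1 - 2 * (k + 1))) := by
  obtain ⟨m, rfl⟩ := Nat.exists_eq_add_of_le hk
  rw [show 2 * k + m + 1 - 2 * k = m + 1 by omega, show 2 * k + m - 2 * k = m by omega,
    show 2 * k + m + 1 - 2 * (k + 1) = m - 1 by omega]
  rcases m with _ | m <;> rcases k with _ | k <;>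
    simp [derivative_pow, derivative_mul] <;> ring

noncomputable def gammaPolyB (n : ℕ) : ℤ[X] :=
  ∑ k ∈ range (n / 2 + 1), C (gammaCoeffB n k) * X ^ k * (1 + X) ^ (n - 2 * k)

theorem eulerianB_step_gammaPolyB (n : ℕ) :
    (1 + (2 * (n : ℤ[X]) + 1) * X) * gammaPolyB n + 2 * X * (1 - X) * derivative (gammaPolyB n) =
      ∑ k ∈ range (n / 2 + 1),
        (C ((2 * k + 1) * gammaCoeffB n k) * (X ^ k * (1 + X) ^ (n + 1 - 2 * k)) +
          C (4 * ((n : ℤ) - 2 * k) * gammaCoeffB n k) *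
            (X ^ (k + 1) * (1 + X) ^ (n + 1 - 2 * (k + 1)))) := by
  simp only [gammaPolyB, derivative_sum, mul_sum, ← sum_add_distrib, mul_assoc, derivative_C_mul]
  refine sum_congr rfl fun k hk => ?_
  have hstep := eulerianB_step_X_pow_mul_one_add_X_pow (R := ℤ) (n := n) (k := k)
    (by rw [mem_range] at hk; omega)
  simp only [C_mul, map_add, map_sub, map_natCast, C_ofNat, map_one]
  linear_combination C (gammaCoeffB n k) * hstep

theorem gammaPolyB_succ (n : ℕ) :
    gammaPolyB (n + 1) =
      (1 + (2 * (n : ℤ[X]) + 1) * X) * gammaPolyB n + 2 * X * (1 - X) * derivative (gammaPolyB n) := by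
  have hext : gammaPolyB (n + 1) = ∑ j ∈ range (n / 2 + 2),
      C (gammaCoeffB (n + 1) j) * (X ^ j * (1 + X) ^ (n + 1 - 2 * j)) := by
    simp only [gammaPolyB, mul_assoc]
    refine sum_subset (fun j hj => by rw [mem_range] at *; omega) fun j _ hj => ?_
    rw [mem_range, not_lt] at hj
    rw [gammaCoeffB_eq_zero (Or.inr (by omega)), map_zero, zero_mul]
  calc gammaPolyB (n + 1)
      = ∑ j ∈ range (n / 2 + 2),
          (C ((2 * j + 1) * gammaCoeffB n j) * (X ^ j * (1 + X) ^ (n + 1 - 2 * j)) +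
            C (4 * ((n : ℤ) + 2 - 2 * j) * gammaCoeffB n (j - 1)) *
              (X ^ j * (1 + X) ^ (n + 1 - 2 * j))) := by
        rw [hext]
        refine sum_congr rfl fun j _ => ?_
        rw [gammaCoeffB_succ n (Int.natCast_nonneg j), C_add, add_mul]
    _ = _ := by
        rw [sum_add_distrib, eulerianB_step_gammaPolyB, sum_add_distrib]
        congr 1
        · rw [sum_range_succ, gammaCoeffB_eq_zero (Or.inr (by omega))]
          simp only [mul_zero, map_zero, zero_mul, add_zero]
        · rw [sum_range_succ', gammaCoeffB_eq_zero (Or.inl (by omega))]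
          simp only [mul_zero, map_zero, zero_mul, add_zero]
          refine sum_congr rfl fun k _ => ?_
          push_cast
          ring_nf

section
variable (R : Type*) [CommRing R]

noncomputable def eulerianBSeries (n : ℕ) : PowerSeries R :=
  PowerSeries.mk fun k => (2 * (k : R) + 1) ^ n

theorem eulerianBSeries_zero : eulerianBSeries R 0 = PowerSeries.mk 1 := by
  ext; simp [eulerianBSeries]

theorem eulerianBSeries_succ (n : ℕ) :
    eulerianBSeries R (n + 1) =
      eulerianBSeries R n + 2 * PowerSeries.X * PowerSeries.derivative R (eulerianBSeries R n) := by
  ext k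
  rcases k with _ | k
  · simp [eulerianBSeries, mul_assoc]
  · rw [map_add, mul_comm 2, mul_assoc, PowerSeries.coeff_succ_X_mul, ← map_ofNat PowerSeries.C,
      PowerSeries.coeff_C_mul, PowerSeries.coeff_derivative]
    simp only [eulerianBSeries, PowerSeries.coeff_mk]
    push_cast
    ring

end

theorem eulerianB_step_mul_one_sub_X_pow {R : Type*} [CommRing R] (f : PowerSeries R) (n : ℕ) :
    (f + 2 * PowerSeries.X * PowerSeries.derivative R f) * (1 - PowerSeries.X) ^ (n + 2) =
      (1 + (2 * (n : PowerSeries R) + 1) * PowerSeries.X) * (f * (1 - PowerSeries.X) ^ (n + 1)) +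
        2 * PowerSeries.X * (1 - PowerSeries.X) *
          PowerSeries.derivative R (f * (1 - PowerSeries.X) ^ (n + 1)) := by
  simp only [Derivation.leibniz, Derivation.leibniz_pow, map_sub, PowerSeries.derivative_X,
    Derivation.map_one_eq_zero, smul_eq_mul, nsmul_eq_mul, Nat.add_sub_cancel]
  push_cast
  ring

theorem coe_gammaPolyB (n : ℕ) :
    (gammaPolyB n : PowerSeries ℤ) = eulerianBSeries ℤ n * (1 - PowerSeries.X) ^ (n + 1) := by
  induction n with
  | zero =>
    simp [gammaPolyB, gammaCoeffB, eulerianBSeries_zero, PowerSeries.mk_one_mul_one_sub_eq_one]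
  | succ n ih =>
    rw [gammaPolyB_succ, eulerianBSeries_succ, eulerianB_step_mul_one_sub_X_pow, ← ih,
      ← Polynomial.coeToPowerSeries.ringHom_apply]
    simp only [map_add, map_mul, map_sub, map_one, map_natCast, map_ofNat,
      Polynomial.coeToPowerSeries.ringHom_apply, Polynomial.coe_X, PowerSeries.derivative_coe]

/-- The type B Eulerian polynomials, defined by
`∑_{k≥0} (2k+1)^n t^k = B_n(t)/(1-t)^{n+1}`, can be written as
`B_n(t) = ∑_{k=0}^{⌊n/2⌋} b_{n,k} t^k (1+t)^{n-2k}` with positive integers `b_{n,k}`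
satisfying `b_{n,k} = (2k+1) b_{n-1,k} + 4(n+1-2k) b_{n-1,k-1}`, with `b_{1,0} = 1`
and `b_{n,k} = 0` for `k < 0` or `k > ⌊n/2⌋`. -/
theorem eulerianB_gamma_expansion (B : ℕ → Polynomial ℤ)
    (hB : ∀ n, ((B n : PowerSeries ℤ) =
      PowerSeries.mk (fun k => (2 * (k : ℤ) + 1) ^ n) * (1 - PowerSeries.X) ^ (n + 1))) :
    ∃ b : ℕ → ℤ → ℤ,
      b 1 0 = 1 ∧
      (∀ n : ℕ, ∀ k : ℤ, 1 ≤ n → (k < 0 ∨ ((n / 2 : ℕ) : ℤ) < k) → b n k = 0) ∧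
      (∀ n : ℕ, ∀ k : ℤ, 1 ≤ n → 0 ≤ k → k ≤ ((n / 2 : ℕ) : ℤ) → 0 < b n k) ∧
      (∀ n : ℕ, ∀ k : ℤ, 2 ≤ n → 0 ≤ k → k ≤ ((n / 2 : ℕ) : ℤ) →
        b n k = (2 * k + 1) * b (n - 1) k + 4 * ((n : ℤ) + 1 - 2 * k) * b (n - 1) (k - 1)) ∧
      (∀ n : ℕ, 1 ≤ n → B n = ∑ k ∈ Finset.range (n / 2 + 1),
        Polynomial.C (b n (k : ℤ)) * Polynomial.X ^ k * (1 + Polynomial.X) ^ (n - 2 * k)) := by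
  refine ⟨gammaCoeffB, by decide, fun n k _ hk => gammaCoeffB_eq_zero hk,
    fun n k _ hk₀ hkn => gammaCoeffB_pos hk₀ hkn, fun n k hn hk₀ _ => ?_, fun n _ => ?_⟩
  · obtain ⟨m, rfl⟩ : ∃ m, n = m + 1 := ⟨n - 1, by omega⟩
    rw [Nat.add_sub_cancel, gammaCoeffB_succ m hk₀]
    push_cast
    ring
  · exact Polynomial.coe_inj.mp ((hB n).trans (coe_gammaPolyB n).symm)
end

section
/- Carlitz's q-Eulerian coefficients A_{n,k}(q) satisfy the recurrence A_{n,k}(q) = [k]_q A_{n-1,k}(q) + q^{k-1}[n+1-k]_q A_{n-1,k-1}(q) for 1 ≤ k ≤ n. -/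
/-! With `F_n(t) = ∑_j [j+1]_q^n t^j`, the identity `(1 - q) [j+1]_q = 1 - q^{j+1}` gives
`(1 - q) F_{n+1}(t) = F_n(t) - q F_n(qt)`. Since
`(t;q)_{n+2} = (t;q)_{n+1} (1 - q^{n+1} t) = (1 - t) (qt;q)_{n+1}`, this becomes
`(1 - q) A_{n+1}(t) = (1 - q^{n+1} t) A_n(t) - q (1 - t) A_n(qt)`. Comparing coefficients of
`t^{k-1}` and cancelling `1 - q` in the domain `ℤ[q]` gives the recurrence. -/

/-- The `q`-integer `[m]_q = 1 + q + ⋯ + q^{m-1}` as a polynomial in `q`. -/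
noncomputable def qint (m : ℕ) : Polynomial ℤ := ∑ i ∈ Finset.range m, Polynomial.X ^ i

open PowerSeries Finset

theorem PowerSeries.rescale_C {R : Type*} [CommSemiring R] (a c : R) :
    rescale a (C c) = C c := by
  ext (_ | n) <;> simp [coeff_rescale, coeff_C]

section

variable {R : Type*} [CommRing R] (q : R)

noncomputable def qIntPowSeries (n : ℕ) : R⟦X⟧ :=
  mk fun j => (∑ i ∈ range (j + 1), q ^ i) ^ n

/-- The `q`-Pochhammer symbol `(t;q)_n`, with `t = X`. -/
noncomputable def qPochhammer (n : ℕ) : R⟦X⟧ :=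
  ∏ i ∈ range n, (1 - C (q ^ i) * X)

noncomputable def qEulerianSeries (n : ℕ) : R⟦X⟧ :=
  qIntPowSeries q n * qPochhammer q (n + 1)

theorem qPochhammer_succ (n : ℕ) :
    qPochhammer q (n + 1) = qPochhammer q n * (1 - C (q ^ n) * X) :=
  prod_range_succ _ _

theorem qPochhammer_succ' (n : ℕ) :
    qPochhammer q (n + 1) = (1 - X) * rescale q (qPochhammer q n) := by
  rw [qPochhammer, prod_range_succ', qPochhammer, map_prod, pow_zero, map_one, one_mul, mul_comm]
  refine congrArg _ (prod_congr rfl fun i _ => ?_)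
  rw [map_sub, map_one, map_mul, rescale_C, rescale_X, pow_succ, map_mul]
  ring

theorem C_one_sub_mul_qIntPowSeries_succ (n : ℕ) :
    C (1 - q) * qIntPowSeries q (n + 1) =
      qIntPowSeries q n - C q * rescale q (qIntPowSeries q n) := by
  ext j
  simp only [qIntPowSeries, coeff_C_mul, LinearMap.map_sub, coeff_rescale, coeff_mk]
  linear_combination (∑ i ∈ range (j + 1), q ^ i) ^ n * mul_neg_geom_sum q (j + 1)

/-- The factor `X` shifts coefficient `k - 1` to `k` and absorbs the factor `q` of the rescaled
term, since `rescale q (X * f) = C q * X * rescale q f`. -/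
theorem C_one_sub_mul_X_mul_qEulerianSeries_succ (n : ℕ) :
    C (1 - q) * (X * qEulerianSeries q (n + 1)) =
      (1 - C (q ^ (n + 1)) * X) * (X * qEulerianSeries q n) -
        (1 - X) * rescale q (X * qEulerianSeries q n) := by
  simp only [qEulerianSeries, map_mul, rescale_X]
  linear_combination X * qPochhammer q (n + 2) * C_one_sub_mul_qIntPowSeries_succ q n +
    X * qIntPowSeries q n * qPochhammer_succ q (n + 1) -
    X * C q * rescale q (qIntPowSeries q n) * qPochhammer_succ' q (n + 1)

theorem one_sub_mul_coeff_succ_of_functional_eq {f g : R⟦X⟧} {n j : ℕ} (hj : j ≤ n)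
    (h : C (1 - q) * g = (1 - C (q ^ (n + 1)) * X) * f - (1 - X) * rescale q f) :
    (1 - q) * coeff (j + 1) g =
      (1 - q) * ((∑ i ∈ range (j + 1), q ^ i) * coeff (j + 1) f +
        q ^ j * (∑ i ∈ range (n + 1 - j), q ^ i) * coeff j f) := by
  have hc := congrArg (coeff (j + 1)) h
  simp only [coeff_C_mul, sub_mul, one_mul, map_sub, mul_assoc, coeff_succ_X_mul,
    coeff_rescale] at hc
  have hpow : q ^ j * q ^ (n + 1 - j) = q ^ (n + 1) := by
    rw [← pow_add, Nat.add_sub_cancel' (by omega)]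
  linear_combination hc - coeff (j + 1) f * mul_neg_geom_sum q (j + 1) -
    q ^ j * coeff j f * mul_neg_geom_sum q (n + 1 - j) + coeff j f * hpow

end

/-- Carlitz's q-Eulerian coefficients `A_{n,k}(q)`, where
`A_n(t,q) = ∑_k A_{n,k}(q) t^{k-1}` is defined by
`∑_{j≥0} [j+1]_q^n t^j = A_n(t,q)/(t;q)_{n+1}`, satisfy the recurrence
`A_{n,k}(q) = [k]_q A_{n-1,k}(q) + q^{k-1} [n+1-k]_q A_{n-1,k-1}(q)` for `1 ≤ k ≤ n`.
Here `A n` is a polynomial in `t` whose coefficients are polynomials in `q`, and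
`Ank n k = A_{n,k}(q)` is its coefficient of `t^{k-1}` (with `Ank n 0 = 0`). -/
theorem carlitz_qEulerian_recurrence
    (A : ℕ → Polynomial (Polynomial ℤ))
    (hA : ∀ n, ((A n : PowerSeries (Polynomial ℤ)) =
      PowerSeries.mk (fun j => (qint (j + 1)) ^ n) *
        ∏ i ∈ Finset.range (n + 1),
          (1 - PowerSeries.C (R := Polynomial ℤ) (Polynomial.X ^ i) * PowerSeries.X)))
    (Ank : ℕ → ℕ → Polynomial ℤ)
    (hAnk : ∀ n k, Ank n k = if k = 0 then 0 else (A n).coeff (k - 1)) :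
    ∀ n k, 1 ≤ k → k ≤ n →
      Ank n k = qint k * Ank (n - 1) k +
        Polynomial.X ^ (k - 1) * qint (n + 1 - k) * Ank (n - 1) (k - 1) := by
  have hA_series : ∀ n, (A n : (Polynomial ℤ)⟦X⟧) = qEulerianSeries Polynomial.X n := hA
  have hAnk_coeff : ∀ n k, Ank n k = coeff k (X * (A n : (Polynomial ℤ)⟦X⟧)) := by
    intro n k
    rcases k with _ | k <;> simp [hAnk, coeff_succ_X_mul]
  intro n k hk hkn
  obtain ⟨n, rfl⟩ : ∃ m, n = m + 1 := ⟨n - 1, by omega⟩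
  obtain ⟨j, rfl⟩ : ∃ j, k = j + 1 := ⟨k - 1, by omega⟩
  have h := one_sub_mul_coeff_succ_of_functional_eq _ (by omega : j ≤ n)
    (C_one_sub_mul_X_mul_qEulerianSeries_succ (Polynomial.X : Polynomial ℤ) n)
  simp only [hAnk_coeff, hA_series, Nat.add_sub_cancel, show n + 1 + 1 - (j + 1) = n + 1 - j by omega]
  have hX : (1 - Polynomial.X : Polynomial ℤ) ≠ 0 :=
    sub_ne_zero.mpr (by simpa using (Polynomial.X_ne_C (1 : ℤ)).symm)
  exact mul_left_cancel₀ hX h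
end

section
/- With a_{n,k}(q) defined by the recurrence a_{n,k}(q) = [k]_q a_{n-1,k}(q) + (1+q^{k-1}) q^{k-1} [n+2-2k]_q a_{n-1,k-1}(q) (a_{1,1}(q)=1, zero outside the range), the q-Eulerian coefficients satisfy A_{n,k}(q) = sum_{s≥1} qBinom(n+1-2s, k-s; q) · q^{(k-s)s + binom(k-s,2)} · a_{n,s}(q). -/
/-- The Gaussian (q-binomial) coefficient `[n choose k]_q`, via the q-Pascal rule
`[n+1 choose k+1]_q = [n choose k]_q + q^{k+1} [n choose k+1]_q`. -/
noncomputable def qbinom : ℕ → ℕ → Polynomial ℤ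
  | _, 0 => 1
  | 0, _ + 1 => 0
  | n + 1, k + 1 => qbinom n k + Polynomial.X ^ (k + 1) * qbinom n (k + 1)

open Polynomial Finset

@[simp] lemma qint_zero : qint 0 = 0 := by simp [qint]

@[simp] lemma qint_one : qint 1 = 1 := by simp [qint]

lemma qint_add (a b : ℕ) : qint (a + b) = qint a + X ^ a * qint b := by
  simp only [qint, sum_range_add, mul_sum, pow_add]

lemma qint_mul_X_sub_one (m : ℕ) : qint m * (X - 1) = X ^ m - 1 := geom_sum_mul X m

@[simp] lemma qbinom_zero_right (n : ℕ) : qbinom n 0 = 1 := by cases n <;> rfl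

@[simp] lemma qbinom_zero_succ (k : ℕ) : qbinom 0 (k + 1) = 0 := rfl

lemma qbinom_succ_succ (n k : ℕ) :
    qbinom (n + 1) (k + 1) = qbinom n k + X ^ (k + 1) * qbinom n (k + 1) := rfl

lemma qbinom_eq_zero_of_lt {n k : ℕ} (h : n < k) : qbinom n k = 0 := by
  induction n generalizing k with
  | zero => obtain ⟨k, rfl⟩ := Nat.exists_eq_succ_of_ne_zero (by omega : k ≠ 0); rfl
  | succ n ih =>
    obtain ⟨k, rfl⟩ := Nat.exists_eq_succ_of_ne_zero (by omega : k ≠ 0)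
    rw [qbinom_succ_succ, ih (by omega), ih (by omega), mul_zero, add_zero]

lemma qbinom_one (n : ℕ) : qbinom n 1 = qint n := by
  induction n with
  | zero => rfl
  | succ n ih =>
    rw [qbinom_succ_succ, ih, add_comm n, qint_add, qbinom_zero_right, qint_one, pow_one]

lemma qbinom_succ_succ' (n k : ℕ) :
    qbinom (n + 1) (k + 1) = qbinom n (k + 1) + X ^ (n - k) * qbinom n k := by
  induction n generalizing k with
  | zero => cases k <;> simp [qbinom_succ_succ]
  | succ n ih =>
    cases k with
    | zero =>
      rw [zero_add, qbinom_one, qbinom_one, qbinom_zero_right, Nat.sub_zero, mul_one, qint_add,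
        qint_one, mul_one]
    | succ k =>
      have hX : X ^ (k + 2) * X ^ (n - (k + 1)) * qbinom n (k + 1) =
          X ^ (n - k) * X ^ (k + 1) * qbinom n (k + 1) := by
        rcases le_or_gt (k + 1) n with h | h
        · rw [← pow_add, ← pow_add]; congr 2; omega
        · rw [qbinom_eq_zero_of_lt h, mul_zero, mul_zero]
      rw [Nat.add_sub_add_right]
      linear_combination qbinom_succ_succ (n + 1) (k + 1) + ih k
        - X ^ (n - k) * qbinom_succ_succ n k + X ^ (k + 2) * ih (k + 1)
        - qbinom_succ_succ n (k + 1) + hX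

lemma qint_sub_mul_qbinom (n k : ℕ) :
    qint (n - k) * qbinom n k = qint (k + 1) * qbinom n (k + 1) := by
  have hPascal := (qbinom_succ_succ n k).symm.trans (qbinom_succ_succ' n k)
  refine mul_left_cancel₀ (X_sub_C_ne_zero (1 : ℤ)) ?_
  rw [C_1]
  linear_combination (qbinom n k * qint_mul_X_sub_one (n - k)
    - qbinom n (k + 1) * qint_mul_X_sub_one (k + 1) - hPascal)

lemma qint_succ_mul_qbinom_succ (n k : ℕ) :
    qint (k + 1) * qbinom n (k + 1) = qint n * qbinom (n - 1) k := by
  cases n with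
  | zero => simp
  | succ n =>
    rcases le_or_gt k n with h | h
    · have hq : qint (n + 1) = qint (k + 1) + X ^ (k + 1) * qint (n - k) := by
        rw [← qint_add]; congr 1; omega
      rw [qbinom_succ_succ, Nat.add_sub_cancel, hq]
      linear_combination -X ^ (k + 1) * qint_sub_mul_qbinom n k
    · rw [qbinom_eq_zero_of_lt (by omega : n + 1 < k + 1),
        qbinom_eq_zero_of_lt (by omega : n + 1 - 1 < k)]
      ring

lemma qint_add_mul_qbinom_add (M i s : ℕ) :
    qint (s + i + 1) * qbinom M (i + 1) + qint (M + s - i) * qbinom M i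
      = qint s * qbinom (M + 1) (i + 1) + (1 + X ^ s) * qint M * qbinom (M - 1) i := by
  have h₁ : qint (s + i + 1) = qint s + X ^ s * qint (i + 1) := by rw [add_assoc, qint_add]
  have h₂ : qint (M + s - i) * qbinom M i =
      (qint (M - i) + X ^ (M - i) * qint s) * qbinom M i := by
    rcases le_or_gt i M with h | h
    · rw [← qint_add]; congr 2; omega
    · rw [qbinom_eq_zero_of_lt h, mul_zero, mul_zero]
  linear_combination qbinom M (i + 1) * h₁ + h₂ - qint s * qbinom_succ_succ' M i
    + (1 + X ^ s) * qint_succ_mul_qbinom_succ M i + qint_sub_mul_qbinom M i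

/-- The coefficient of `a_{n,s}` in the expansion of `A_{n,k}`. -/
noncomputable def expansionCoeff (n k s : ℕ) : ℤ[X] :=
  if s ≤ k then qbinom (n + 1 - 2 * s) (k - s) * X ^ ((k - s) * s + (k - s).choose 2) else 0

lemma expansionCoeff_recurrence (n k s : ℕ) (hk : 1 ≤ k) (hs : 2 * s ≤ n + 1) :
    qint s * expansionCoeff (n + 1) k s +
        (1 + X ^ s) * X ^ s * qint (n + 1 - 2 * s) * expansionCoeff (n + 1) k (s + 1) =
      qint k * expansionCoeff n k s +
        X ^ (k - 1) * qint (n + 2 - k) * expansionCoeff n (k - 1) s := by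
  rcases lt_trichotomy s k with h | rfl | h
  · obtain ⟨i, rfl⟩ : ∃ i, k = s + i + 1 := ⟨k - s - 1, by omega⟩
    obtain ⟨M, hM⟩ : ∃ M, n + 1 = M + 2 * s := ⟨n + 1 - 2 * s, by omega⟩
    have hchoose : (i + 1).choose 2 = i + i.choose 2 := by
      rw [Nat.choose_succ_succ', Nat.choose_one_right]
    simp only [expansionCoeff, if_pos h.le, if_pos (by omega : s + 1 ≤ s + i + 1),
      if_pos (by omega : s ≤ s + i + 1 - 1)]
    rw [show n + 1 + 1 - 2 * s = M + 1 by omega, show n + 1 + 1 - 2 * (s + 1) = M - 1 by omega,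
      show n + 1 - 2 * s = M by omega, show n + 2 - (s + i + 1) = M + s - i by omega,
      show s + i + 1 - s = i + 1 by omega, show s + i + 1 - (s + 1) = i by omega,
      show s + i + 1 - 1 - s = i by omega, Nat.add_sub_cancel, hchoose]
    linear_combination -X ^ (i * s + i.choose 2 + s + i) * qint_add_mul_qbinom_add M i s
  · simp only [expansionCoeff, if_pos le_rfl, if_neg (by omega : ¬ s + 1 ≤ s),
      if_neg (by omega : ¬ s ≤ s - 1)]
    simp
  · simp only [expansionCoeff, if_neg h.not_ge, if_neg (by omega : ¬ s + 1 ≤ k),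
      if_neg (by omega : ¬ s ≤ k - 1)]
    ring

def IsCarlitzQEulerian (A : ℕ → ℕ → ℤ[X]) : Prop :=
  A 1 1 = 1 ∧ (∀ n k, 1 ≤ n → (k = 0 ∨ n < k) → A n k = 0) ∧
    ∀ n k, 2 ≤ n → 1 ≤ k → k ≤ n →
      A n k = qint k * A (n - 1) k + X ^ (k - 1) * qint (n + 1 - k) * A (n - 1) (k - 1)

lemma IsCarlitzQEulerian.eq {A B : ℕ → ℕ → ℤ[X]} (hA : IsCarlitzQEulerian A)
    (hB : IsCarlitzQEulerian B) {n : ℕ} (hn : 1 ≤ n) (k : ℕ) : A n k = B n k := by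
  obtain ⟨hA11, hA0, hArec⟩ := hA
  obtain ⟨hB11, hB0, hBrec⟩ := hB
  induction n, hn using Nat.le_induction generalizing k with
  | base =>
    rcases (by omega : k = 1 ∨ (k = 0 ∨ 1 < k)) with rfl | hk
    · rw [hA11, hB11]
    · rw [hA0 1 k le_rfl hk, hB0 1 k le_rfl hk]
  | succ n hn ih =>
    by_cases hk : k = 0 ∨ n + 1 < k
    · rw [hA0 _ k (by omega) hk, hB0 _ k (by omega) hk]
    · rw [hArec (n + 1) k (by omega) (by omega) (by omega),
        hBrec (n + 1) k (by omega) (by omega) (by omega), Nat.add_sub_cancel, ih, ih]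

noncomputable def qEulerianExpansion (a : ℕ → ℕ → ℤ[X]) (n k : ℕ) : ℤ[X] :=
  ∑ s ∈ range (n + 2), expansionCoeff n k s * a n s

section

variable {a : ℕ → ℕ → ℤ[X]}

lemma qEulerianExpansion_eq_sum_Icc {n k : ℕ} (ha_n0 : a n 0 = 0) (hk : k ≤ n + 1) :
    qEulerianExpansion a n k = ∑ s ∈ Icc 1 k,
      qbinom (n + 1 - 2 * s) (k - s) * X ^ ((k - s) * s + (k - s).choose 2) * a n s := by
  have hsub : Icc 1 k ⊆ range (n + 2) := fun s hs => by simp only [mem_Icc, mem_range] at *; omega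
  rw [qEulerianExpansion, ← sum_subset hsub fun s _ hs => ?_]
  · exact sum_congr rfl fun s hs => by rw [expansionCoeff, if_pos (mem_Icc.1 hs).2]
  · rcases Nat.eq_zero_or_pos s with rfl | hs0
    · rw [ha_n0, mul_zero]
    · rw [expansionCoeff, if_neg fun h => hs (mem_Icc.2 ⟨hs0, h⟩), zero_mul]

lemma qEulerianExpansion_eq_zero
    (ha0 : ∀ n k, 1 ≤ n → (k = 0 ∨ (n + 1) / 2 < k) → a n k = 0)
    {n k : ℕ} (hn : 1 ≤ n) (hk : k = 0 ∨ n < k) : qEulerianExpansion a n k = 0 := by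
  refine sum_eq_zero fun s _ => ?_
  by_cases hs : s = 0 ∨ (n + 1) / 2 < s
  · rw [ha0 n s hn hs, mul_zero]
  · rw [expansionCoeff]
    split_ifs
    · rw [qbinom_eq_zero_of_lt (by omega), zero_mul, zero_mul]
    · rw [zero_mul]

lemma apply_succ_succ_of_rec
    (ha0 : ∀ n k, 1 ≤ n → (k = 0 ∨ (n + 1) / 2 < k) → a n k = 0)
    (harec : ∀ n k, 2 ≤ n → 1 ≤ k → k ≤ (n + 1) / 2 →
      a n k = qint k * a (n - 1) k +
        (1 + X ^ (k - 1)) * X ^ (k - 1) * qint (n + 2 - 2 * k) * a (n - 1) (k - 1))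
    {n : ℕ} (hn : 1 ≤ n) (s : ℕ) :
    a (n + 1) (s + 1) =
      qint (s + 1) * a n (s + 1) + (1 + X ^ s) * X ^ s * qint (n + 1 - 2 * s) * a n s := by
  by_cases hs : s + 1 ≤ (n + 1 + 1) / 2
  · rw [harec (n + 1) (s + 1) (by omega) (by omega) hs, Nat.add_sub_cancel, Nat.add_sub_cancel,
      show n + 1 + 2 - 2 * (s + 1) = n + 1 - 2 * s by omega]
  · rw [ha0 (n + 1) (s + 1) (by omega) (Or.inr (by omega)), ha0 n (s + 1) hn (Or.inr (by omega)),
      show n + 1 - 2 * s = 0 by omega, qint_zero]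
    ring

lemma qEulerianExpansion_succ
    (ha0 : ∀ n k, 1 ≤ n → (k = 0 ∨ (n + 1) / 2 < k) → a n k = 0)
    (harec : ∀ n k, 2 ≤ n → 1 ≤ k → k ≤ (n + 1) / 2 →
      a n k = qint k * a (n - 1) k +
        (1 + X ^ (k - 1)) * X ^ (k - 1) * qint (n + 2 - 2 * k) * a (n - 1) (k - 1))
    {n k : ℕ} (hn : 1 ≤ n) (hk : 1 ≤ k) :
    qEulerianExpansion a (n + 1) k = qint k * qEulerianExpansion a n k +
      X ^ (k - 1) * qint (n + 2 - k) * qEulerianExpansion a n (k - 1) := by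
  set c := expansionCoeff (n + 1) k
  have hshift : ∑ s ∈ range (n + 2), qint (s + 1) * c (s + 1) * a n (s + 1) =
      ∑ s ∈ range (n + 2), qint s * c s * a n s := by
    have h := (sum_range_succ' (fun s => qint s * c s * a n s) (n + 2)).symm.trans
      (sum_range_succ _ (n + 2))
    simpa [ha0 n (n + 2) hn (Or.inr (by omega))] using h
  calc qEulerianExpansion a (n + 1) k
      = ∑ s ∈ range (n + 2), c (s + 1) * a (n + 1) (s + 1) := by
        rw [qEulerianExpansion, sum_range_succ', ha0 (n + 1) 0 (by omega) (Or.inl rfl), mul_zero,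
          add_zero]
    _ = ∑ s ∈ range (n + 2), qint s * c s * a n s +
          ∑ s ∈ range (n + 2),
            (1 + X ^ s) * X ^ s * qint (n + 1 - 2 * s) * c (s + 1) * a n s := by
        rw [← hshift, ← sum_add_distrib]
        exact sum_congr rfl fun s _ => by rw [apply_succ_succ_of_rec ha0 harec hn]; ring
    _ = ∑ s ∈ range (n + 2), (qint k * expansionCoeff n k s +
          X ^ (k - 1) * qint (n + 2 - k) * expansionCoeff n (k - 1) s) * a n s := by
        rw [← sum_add_distrib]
        refine sum_congr rfl fun s _ => ?_
        by_cases hs : 2 * s ≤ n + 1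
        · rw [← expansionCoeff_recurrence n k s hk hs]
          ring
        · rw [ha0 n s hn (Or.inr (by omega))]
          ring
    _ = _ := by
        rw [qEulerianExpansion, qEulerianExpansion, mul_sum, mul_sum, ← sum_add_distrib]
        exact sum_congr rfl fun s _ => by ring

lemma isCarlitzQEulerian_qEulerianExpansion (ha11 : a 1 1 = 1)
    (ha0 : ∀ n k, 1 ≤ n → (k = 0 ∨ (n + 1) / 2 < k) → a n k = 0)
    (harec : ∀ n k, 2 ≤ n → 1 ≤ k → k ≤ (n + 1) / 2 →
      a n k = qint k * a (n - 1) k +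
        (1 + X ^ (k - 1)) * X ^ (k - 1) * qint (n + 2 - 2 * k) * a (n - 1) (k - 1)) :
    IsCarlitzQEulerian (qEulerianExpansion a) := by
  refine ⟨?_, fun n k hn hk => qEulerianExpansion_eq_zero ha0 hn hk, fun n k hn hk _ => ?_⟩
  · simp [qEulerianExpansion, sum_range_succ, expansionCoeff, ha11, ha0 1 0 le_rfl (Or.inl rfl)]
  · obtain ⟨n, rfl⟩ : ∃ m, n = m + 1 := ⟨n - 1, by omega⟩
    rw [Nat.add_sub_cancel]
    exact qEulerianExpansion_succ ha0 harec (by omega) hk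

end

/-- With `a_{n,k}(q)` defined by the recurrence
`a_{n,k}(q) = [k]_q a_{n-1,k}(q) + (1+q^{k-1}) q^{k-1} [n+2-2k]_q a_{n-1,k-1}(q)`
(`a_{1,1}(q) = 1`, zero outside the range), and with Carlitz's q-Eulerian numbers
`A_{n,k}(q)` defined by `A_{n,k} = [k]_q A_{n-1,k} + q^{k-1}[n+1-k]_q A_{n-1,k-1}`
with `A_{1,1}(q) = 1` (zero outside `1 ≤ k ≤ n`), one has
`A_{n,k}(q) = ∑_{s≥1} [n+1-2s choose k-s]_q q^{(k-s)s + binom(k-s,2)} a_{n,s}(q)`. -/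
theorem carlitz_qEulerian_coeff_expansion
    (Ank : ℕ → ℕ → Polynomial ℤ)
    (hA11 : Ank 1 1 = 1)
    (hA0 : ∀ n k, 1 ≤ n → (k = 0 ∨ n < k) → Ank n k = 0)
    (hArec : ∀ n k, 2 ≤ n → 1 ≤ k → k ≤ n →
      Ank n k = qint k * Ank (n - 1) k +
        Polynomial.X ^ (k - 1) * qint (n + 1 - k) * Ank (n - 1) (k - 1))
    (a : ℕ → ℕ → Polynomial ℤ)
    (ha11 : a 1 1 = 1)
    (ha0 : ∀ n k, 1 ≤ n → (k = 0 ∨ (n + 1) / 2 < k) → a n k = 0)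
    (harec : ∀ n k, 2 ≤ n → 1 ≤ k → k ≤ (n + 1) / 2 →
      a n k = qint k * a (n - 1) k +
        (1 + Polynomial.X ^ (k - 1)) * Polynomial.X ^ (k - 1) * qint (n + 2 - 2 * k) *
          a (n - 1) (k - 1)) :
    ∀ n k, 1 ≤ n → 1 ≤ k → k ≤ n →
      Ank n k = ∑ s ∈ Finset.Icc 1 k,
        qbinom (n + 1 - 2 * s) (k - s) *
          Polynomial.X ^ ((k - s) * s + Nat.choose (k - s) 2) * a n s := by
  intro n k hn _ hkn
  have hA : IsCarlitzQEulerian Ank := ⟨hA11, hA0, hArec⟩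
  rw [hA.eq (isCarlitzQEulerian_qEulerianExpansion ha11 ha0 harec) hn k,
    qEulerianExpansion_eq_sum_Icc (ha0 n 0 hn (Or.inl rfl)) (by omega)]
end

section
/- For every n ≥ 1, the quotient A_{2n}(t,q)/(1+tq^n) is a polynomial in t and q with nonnegative integer coefficients. -/
/-!
Since `(1 - q) [j+1]_q = 1 - q^{j+1}`, the generating function yields Carlitz's recurrence
`(1 - q) A_{m+1}(t) = (1 - q^{m+1} t) A_m(t) - q (1 - t) A_m(q t)`, with `A_0 = 1`.
The same recurrence holds for `G_m(t) = ∑_k γ_{m,k} t^k (-t q^{k+1}; q)_{m-1-2k}`, where the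
`γ_{m,k}` (`qGamma`) have nonnegative coefficients and vanish unless `2k < m` or `m = k = 0`;
it reduces to a three-term identity for each basis polynomial. Hence `A_m = G_m`, and for
`m = 2n` each product `(-t q^{k+1}; q)_{2n-1-2k}` with `k < n` contains the factor `1 + t q^n`.
Nonnegativity of coefficients is tracked as membership in the image of `ℕ[X]` resp. `ℕ[X][X]`.
-/

namespace QEulerian

open Polynomial Finset

lemma qint_zero : qint 0 = 0 := by simp [qint]

lemma qint_one : qint 1 = 1 := by simp [qint]

lemma one_sub_X_mul_qint (n : ℕ) : (1 - X) * qint n = 1 - X ^ n := by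
  rw [qint, mul_comm, ← neg_sub, mul_neg, geom_sum_mul, neg_sub]

lemma qint_mem_lifts (n : ℕ) : qint n ∈ lifts (Nat.castRingHom ℤ) :=
  sum_mem fun i _ => X_pow_mem_lifts _ i

noncomputable def qGamma : ℕ → ℕ → ℤ[X]
  | 0, 0 => 1
  | 0, _ + 1 => 0
  | m + 1, 0 => qGamma m 0
  | m + 1, k + 1 => qint (k + 2) * qGamma m (k + 1) +
      X ^ (k + 1) * (1 + X ^ (k + 1)) * qint (m - 1 - 2 * k) * qGamma m k

lemma qGamma_eq_zero : ∀ {m k : ℕ}, 0 < k → m ≤ 2 * k → qGamma m k = 0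
  | 0, _ + 1, _, _ => rfl
  | m + 1, k + 1, _, h => by
    rw [qGamma, qGamma_eq_zero (by omega) (by omega), show m - 1 - 2 * k = 0 by omega, qint_zero]
    ring

lemma qGamma_mem_lifts : ∀ m k, qGamma m k ∈ lifts (Nat.castRingHom ℤ)
  | 0, 0 => one_mem _
  | 0, _ + 1 => zero_mem _
  | m + 1, 0 => qGamma_mem_lifts m 0
  | m + 1, k + 1 =>
    add_mem (mul_mem (qint_mem_lifts _) (qGamma_mem_lifts m _))
      (mul_mem (mul_mem (mul_mem (X_pow_mem_lifts _ _)
        (add_mem (one_mem _) (X_pow_mem_lifts _ _))) (qint_mem_lifts _)) (qGamma_mem_lifts m k))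

lemma sum_qGamma_succ_smul {M : Type*} [AddCommMonoid M] [Module ℤ[X] M] (m : ℕ) (F : ℕ → M) :
    ∑ k ∈ range (m + 2), qGamma (m + 1) k • F k =
      ∑ k ∈ range (m + 1), qGamma m k • (qint (k + 1) • F k +
        (X ^ (k + 1) * (1 + X ^ (k + 1)) * qint (m - 1 - 2 * k)) • F (k + 1)) := by
  have htop : qGamma m (m + 1) = 0 := qGamma_eq_zero (by omega) (by omega)
  simp only [smul_add, sum_add_distrib]
  rw [← add_zero (∑ k ∈ range (m + 1), qGamma m k • qint (k + 1) • F k),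
    ← zero_smul ℤ[X] (qint (m + 1 + 1) • F (m + 1)), ← htop, ← sum_range_succ,
    sum_range_succ', sum_range_succ' _ (m + 1)]
  simp only [qGamma, zero_add, qint_one, mul_comm (qGamma m _), smul_smul, add_smul,
    sum_add_distrib]
  rw [add_right_comm, one_mul]

lemma C_one_sub_X_mul_C_qint (n : ℕ) :
    (1 - C X) * C (qint n) = 1 - C (X : ℤ[X]) ^ n := by
  rw [← C_1, ← C_sub, ← C_mul, one_sub_X_mul_qint, C_sub, C_1, C_pow]

/-- `(-t q^a; q)_j`, where `t = X` and `q = C X`. -/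
noncomputable def qPoch (a j : ℕ) : ℤ[X][X] := ∏ i ∈ range j, (1 + C (X ^ (a + i)) * X)

lemma qPoch_succ (a j : ℕ) : qPoch a (j + 1) = qPoch a j * (1 + C (X ^ (a + j)) * X) :=
  prod_range_succ _ _

lemma qPoch_succ' (a j : ℕ) : qPoch a (j + 1) = (1 + C (X ^ a) * X) * qPoch (a + 1) j := by
  rw [qPoch, prod_range_succ', mul_comm, qPoch, add_zero]
  simp only [Nat.add_right_comm a 1, add_assoc]

lemma qPoch_comp (a j : ℕ) : (qPoch a j).comp (C X * X) = qPoch (a + 1) j := by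
  simp only [qPoch, Polynomial.prod_comp, add_comp, one_comp, mul_comp, C_comp, X_comp]
  refine prod_congr rfl fun i _ => ?_
  rw [← mul_assoc, ← C_mul, ← pow_succ, Nat.add_right_comm]

lemma qPoch_step (k j : ℕ) :
    (1 - C (X ^ (2 * k + j + 2)) * X) * (X ^ k * qPoch (k + 1) j)
      - C X * (1 - X) * (C (X ^ k) * X ^ k * qPoch (k + 2) j) =
    (1 - C X) * (C (qint (k + 1)) * (X ^ k * qPoch (k + 1) (j + 1))
      + C (X ^ (k + 1) * (1 + X ^ (k + 1)) * qint j) * (X ^ (k + 1) * qPoch (k + 2) (j - 1))) := by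
  have hk := C_one_sub_X_mul_C_qint (k + 1)
  rcases j with _ | j
  · rw [qPoch_succ']
    simp only [qPoch, range_zero, prod_empty, qint_zero, C_0, mul_zero, zero_mul,
      add_zero, map_pow]
    linear_combination (-(X : ℤ[X][X]) ^ k * (1 + C X ^ (k + 1) * X)) * hk
  · have hj := C_one_sub_X_mul_C_qint (j + 1)
    rw [qPoch_succ' (k + 1), qPoch_succ' (k + 1), qPoch_succ (k + 2),
      show k + 1 + 1 = k + 2 by rfl, add_tsub_cancel_right]
    simp only [map_mul, map_add, map_one, map_pow]
    linear_combination (-((1 + C X ^ (k + 1) * X) * (1 + C X ^ (k + 2 + j) * X) *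
        (X ^ k * qPoch (k + 2) j))) * hk
      - (C X ^ (k + 1) * (1 + C X ^ (k + 1)) * X * (X ^ k * qPoch (k + 2) j)) * hj

noncomputable def gammaBasis (m k : ℕ) : ℤ[X][X] := X ^ k * qPoch (k + 1) (m - 1 - 2 * k)

lemma gammaBasis_step_of_lt {m k : ℕ} (h : 2 * k < m) :
    (1 - C (X ^ (m + 1)) * X) * gammaBasis m k
      - C X * (1 - X) * (gammaBasis m k).comp (C X * X) =
    (1 - C X) * (C (qint (k + 1)) * gammaBasis (m + 1) k
      + C (X ^ (k + 1) * (1 + X ^ (k + 1)) * qint (m - 1 - 2 * k)) *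
        gammaBasis (m + 1) (k + 1)) := by
  obtain ⟨j, rfl⟩ : ∃ j, m = 2 * k + 1 + j := ⟨m - (2 * k + 1), by omega⟩
  have hcomp :
      (gammaBasis (2 * k + 1 + j) k).comp (C X * X) = C (X ^ k) * X ^ k * qPoch (k + 2) j := by
    rw [gammaBasis, mul_comp, X_pow_comp, qPoch_comp, mul_pow, C_pow]
    simp only [show 2 * k + 1 + j - 1 - 2 * k = j by omega]
  rw [hcomp, gammaBasis, gammaBasis, gammaBasis, show 2 * k + 1 + j + 1 = 2 * k + j + 2 by omega,
    show 2 * k + j + 2 - 1 - 2 * k = j + 1 by omega, show 2 * k + 1 + j - 1 - 2 * k = j by omega,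
    show 2 * k + j + 2 - 1 - 2 * (k + 1) = j - 1 by omega]
  exact qPoch_step k j

lemma gammaBasis_step {m k : ℕ} (h : qGamma m k ≠ 0) :
    (1 - C (X ^ (m + 1)) * X) * gammaBasis m k
      - C X * (1 - X) * (gammaBasis m k).comp (C X * X) =
    (1 - C X) * (C (qint (k + 1)) * gammaBasis (m + 1) k
      + C (X ^ (k + 1) * (1 + X ^ (k + 1)) * qint (m - 1 - 2 * k)) *
        gammaBasis (m + 1) (k + 1)) := by
  rcases lt_or_ge (2 * k) m with hlt | hge
  · exact gammaBasis_step_of_lt hlt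
  obtain rfl : k = 0 := by
    by_contra hk
    exact h (qGamma_eq_zero (Nat.pos_of_ne_zero hk) hge)
  obtain rfl : m = 0 := by omega
  simp only [gammaBasis, qPoch, qint_one, qint_zero, zero_add, pow_one, pow_zero, zero_tsub,
    tsub_self, mul_zero, range_zero, prod_empty, mul_one, one_comp, map_pow, map_one, map_zero,
    zero_mul, add_zero]
  ring

noncomputable def gammaExpansion (m : ℕ) : ℤ[X][X] :=
  ∑ k ∈ range (m + 1), qGamma m k • gammaBasis m k

lemma gammaExpansion_succ (m : ℕ) :
    (1 - C X) * gammaExpansion (m + 1) =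
      (1 - C (X ^ (m + 1)) * X) * gammaExpansion m
        - C X * (1 - X) * (gammaExpansion m).comp (C X * X) := by
  simp only [gammaExpansion, mul_sum, mul_smul_comm, sum_qGamma_succ_smul, Polynomial.sum_comp,
    smul_comp, ← sum_sub_distrib]
  refine sum_congr rfl fun k _ => ?_
  by_cases hγ : qGamma m k = 0
  · simp [hγ]
  rw [← smul_sub, gammaBasis_step hγ]
  simp only [smul_eq_C_mul]

lemma coe_comp_C_mul_X {R : Type*} [CommSemiring R] (p : R[X]) (a : R) :
    ((p.comp (C a * X) : R[X]) : PowerSeries R) = PowerSeries.rescale a p := by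
  refine PowerSeries.ext fun n => ?_
  rw [PowerSeries.coeff_rescale, Polynomial.coeff_coe, Polynomial.coeff_coe, comp_C_mul_X_coeff,
    mul_comm]

lemma rescale_one_sub_C_mul_X {R : Type*} [CommRing R] (a b : R) :
    PowerSeries.rescale a (1 - PowerSeries.C b * PowerSeries.X) =
      1 - PowerSeries.C (b * a) * PowerSeries.X := by
  have h := coe_comp_C_mul_X (1 - C b * X) a
  simp only [sub_comp, one_comp, mul_comp, C_comp, X_comp, Polynomial.coe_sub, Polynomial.coe_one,
    Polynomial.coe_mul, Polynomial.coe_C, Polynomial.coe_X] at h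
  rw [← h, ← mul_assoc, ← map_mul]

noncomputable def carlitzSeries (m : ℕ) : PowerSeries ℤ[X] :=
  PowerSeries.mk (fun j => qint (j + 1) ^ m) *
    ∏ i ∈ range (m + 1), (1 - PowerSeries.C (X ^ i) * PowerSeries.X)

lemma carlitzSeries_zero : carlitzSeries 0 = 1 := by
  ext n
  rcases n with _ | n <;> simp [carlitzSeries, mul_sub, PowerSeries.coeff_succ_mul_X]

lemma carlitzSeries_succ (m : ℕ) :
    (1 - PowerSeries.C X) * carlitzSeries (m + 1) =
      (1 - PowerSeries.C (X ^ (m + 1)) * PowerSeries.X) * carlitzSeries m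
        - PowerSeries.C X * (1 - PowerSeries.X) * PowerSeries.rescale X (carlitzSeries m) := by
  set s : ℕ → PowerSeries ℤ[X] := fun m => PowerSeries.mk (fun j => qint (j + 1) ^ m)
  set π : ℕ → PowerSeries ℤ[X] := fun m =>
    ∏ i ∈ range (m + 1), (1 - PowerSeries.C (X ^ i) * PowerSeries.X)
  have hs :
      (1 - PowerSeries.C X) * s (m + 1) = s m - PowerSeries.C X * PowerSeries.rescale X (s m) := by
    refine PowerSeries.ext fun j => ?_
    simp only [s, sub_mul, one_mul, map_sub, PowerSeries.coeff_C_mul, PowerSeries.coeff_rescale,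
      PowerSeries.coeff_mk]
    linear_combination qint (j + 1) ^ m * one_sub_X_mul_qint (j + 1)
  have hπ : π (m + 1) = π m * (1 - PowerSeries.C (X ^ (m + 1)) * PowerSeries.X) :=
    prod_range_succ _ _
  have hπ' : π (m + 1) = (1 - PowerSeries.X) * PowerSeries.rescale X (π m) := by
    simp only [π]
    rw [prod_range_succ', pow_zero, map_one, one_mul, mul_comm, map_prod]
    exact congrArg _ (prod_congr rfl fun i _ => by rw [rescale_one_sub_C_mul_X, ← pow_succ])
  simp only [carlitzSeries, map_mul]
  linear_combination π (m + 1) * hs + s m * hπ - PowerSeries.C X * PowerSeries.rescale X (s m) * hπ'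

lemma carlitzSeries_eq_gammaExpansion (m : ℕ) : carlitzSeries m = gammaExpansion m := by
  induction m with
  | zero => simp [carlitzSeries_zero, gammaExpansion, gammaBasis, qPoch, qGamma]
  | succ m ih =>
    have h : (1 - PowerSeries.C X : PowerSeries ℤ[X]) ≠ 0 := by
      rw [← map_one PowerSeries.C, ← map_sub, Ne, map_eq_zero_iff _ PowerSeries.C_injective,
        sub_eq_zero, ← C_1]
      exact (X_ne_C 1).symm
    apply mul_left_cancel₀ h
    rw [carlitzSeries_succ, ih, ← coe_comp_C_mul_X]
    have := congrArg (fun p : ℤ[X][X] => (p : PowerSeries ℤ[X])) (gammaExpansion_succ m)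
    push_cast at this
    exact this.symm

lemma qPoch_add (a i j : ℕ) : qPoch a (i + j) = qPoch a i * qPoch (a + i) j := by
  simp only [qPoch, prod_range_add, add_assoc]

lemma qPoch_mem_lifts (a j : ℕ) : qPoch a j ∈ lifts (mapRingHom (Nat.castRingHom ℤ)) := by
  refine prod_mem fun i _ => add_mem (one_mem _) (mul_mem ?_ (X_mem_lifts _))
  obtain ⟨p, hp⟩ := (lifts_iff_set_range _).1 (X_pow_mem_lifts (Nat.castRingHom ℤ) (a + i))
  rw [← hp]
  exact C_mem_lifts _ p

noncomputable def gammaQuotient (n : ℕ) : ℤ[X][X] :=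
  ∑ k ∈ range (2 * n + 1),
    qGamma (2 * n) k • (X ^ k * qPoch (k + 1) (n - 1 - k) * qPoch (n + 1) (n - 1 - k))

lemma gammaExpansion_two_mul {n : ℕ} (hn : 1 ≤ n) :
    gammaExpansion (2 * n) = (1 + C (X ^ n) * X) * gammaQuotient n := by
  rw [gammaExpansion, gammaQuotient, mul_sum]
  refine sum_congr rfl fun k _ => ?_
  by_cases hγ : qGamma (2 * n) k = 0
  · simp [hγ]
  have hk : k < n := by
    by_contra! h
    exact hγ (qGamma_eq_zero (by omega) (by omega))
  rw [gammaBasis, show 2 * n - 1 - 2 * k = n - 1 - k + (n - 1 - k + 1) by omega, qPoch_add,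
    qPoch_succ', show k + 1 + (n - 1 - k) = n by omega, mul_smul_comm]
  exact congrArg (qGamma (2 * n) k • ·) (by ring)

lemma gammaQuotient_mem_lifts (n : ℕ) :
    gammaQuotient n ∈ lifts (mapRingHom (Nat.castRingHom ℤ)) := by
  refine sum_mem fun k _ => ?_
  obtain ⟨γ, hγ⟩ := (lifts_iff_set_range _).1 (qGamma_mem_lifts (2 * n) k)
  rw [smul_eq_C_mul, ← hγ]
  exact mul_mem (C_mem_lifts _ γ)
    (mul_mem (mul_mem (X_pow_mem_lifts _ k) (qPoch_mem_lifts _ _)) (qPoch_mem_lifts _ _))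

lemma coeff_coeff_nonneg_of_mem_lifts {P : ℤ[X][X]}
    (hP : P ∈ lifts (mapRingHom (Nat.castRingHom ℤ))) (i j : ℕ) : 0 ≤ (P.coeff i).coeff j := by
  obtain ⟨P, rfl⟩ := (lifts_iff_set_range _).1 hP
  simp [coeff_map]

end QEulerian

/-- For every `n ≥ 1`, the quotient `A_{2n}(t,q)/(1+tq^n)` is a polynomial
in `t` and `q` with nonnegative integer coefficients, where `A_n(t,q)` are Carlitz's
q-Eulerian polynomials defined by `∑_{j≥0} [j+1]_q^n t^j = A_n(t,q)/(t;q)_{n+1}`. -/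
theorem qEulerian_even_div_one_add_tqn
    (A : ℕ → Polynomial (Polynomial ℤ))
    (hA : ∀ n, ((A n : PowerSeries (Polynomial ℤ)) =
      PowerSeries.mk (fun j => (qint (j + 1)) ^ n) *
        ∏ i ∈ Finset.range (n + 1),
          (1 - PowerSeries.C (R := Polynomial ℤ) (Polynomial.X ^ i) * PowerSeries.X)))
    (n : ℕ) (hn : 1 ≤ n) :
    ∃ P : Polynomial (Polynomial ℤ),
      A (2 * n) = (1 + Polynomial.C ((Polynomial.X : Polynomial ℤ) ^ n) * Polynomial.X) * P ∧
      ∀ i j, 0 ≤ ((P.coeff i).coeff j) := by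
  have hA_eq : A (2 * n) = QEulerian.gammaExpansion (2 * n) :=
    Polynomial.coe_inj.1 ((hA _).trans (QEulerian.carlitzSeries_eq_gammaExpansion _))
  exact ⟨QEulerian.gammaQuotient n, hA_eq.trans (QEulerian.gammaExpansion_two_mul hn),
    QEulerian.coeff_coeff_nonneg_of_mem_lifts (QEulerian.gammaQuotient_mem_lifts n)⟩
end

section
/- Let f_n(q) = sum_{k=0}^{2n+1} binom(2n+1,k) (-1)^k / (1+q^{k-n}) (a rational function of q). Then the rational function d_n(q) = (-1)^{n+1}(-1;q)_{n+2} f_n(q) / (1-q)^{2n+1} is a polynomial with integer coefficients; equivalently, q = 1 is a zero of order at least 2n+1 of the polynomial (-1)^{n+1}(-1;q)_{n+2} f_n(q). -/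
/-!
With `h j = (1 + q ^ j)⁻¹`, the sum `f_n` is `-Δ^[2n+1] h (-n)` for the forward difference `Δ`
in `j`. The sequences `j ↦ q ^ (j + c)` and `j ↦ (1 + q ^ (j + c))⁻¹` generate a ring of
sequences whose values are regular at `q = 1` and on which, by the Leibniz rule, `Δ` is divisible
by `q - 1`; hence `Δ^[2n+1] h` is `(q - 1) ^ (2n+1)` times such a sequence. Multiplying by
`(-1;q)_{n+2}` clears the denominators of `f_n`, giving an integer polynomial which
`(q - 1) ^ (2n+1)` divides in `ℚ[q]` (the remaining denominator does not vanish at `1`), hence in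
`ℤ[q]` because it is monic.
-/

/-- The natural inclusion of `ℤ[q]` into the field `ℚ(q)` of rational functions. -/
noncomputable def toRat : Polynomial ℤ →+* RatFunc ℚ :=
  (algebraMap (Polynomial ℚ) (RatFunc ℚ)).comp (Polynomial.mapRingHom (Int.castRingHom ℚ))

open Polynomial fwdDiff

section FwdDiff

variable {M K : Type*} [AddCommMonoid M] [CommRing K] {h : M} {t : K}

theorem exists_fwdDiff_iter_eq_pow_smul {A : Set (M → K)}
    (hA : ∀ u ∈ A, ∃ v ∈ A, Δ_[h] u = t • v) (m : ℕ) {u : M → K} (hu : u ∈ A) :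
    ∃ w ∈ A, (Δ_[h])^[m] u = t ^ m • w := by
  induction m generalizing u with
  | zero => exact ⟨u, hu, by simp⟩
  | succ m ih =>
    obtain ⟨v, hv, hΔu⟩ := hA u hu
    obtain ⟨w, hw, hΔv⟩ := ih hv
    refine ⟨w, hw, ?_⟩
    rw [Function.iterate_succ_apply, hΔu, fwdDiff_iter_const_smul, hΔv, smul_smul, pow_succ']

theorem exists_fwdDiff_eq_smul_of_mem_closure {G : Set (M → K)}
    (hshift : ∀ g ∈ G, (fun y ↦ g (y + h)) ∈ G)
    (hG : ∀ g ∈ G, ∃ v ∈ Subring.closure G, Δ_[h] g = t • v)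
    {u : M → K} (hu : u ∈ Subring.closure G) :
    ∃ v ∈ Subring.closure G, Δ_[h] u = t • v := by
  refine (Subring.closure_induction
    (p := fun u _ ↦ (fun y ↦ u (y + h)) ∈ Subring.closure G ∧
      ∃ v ∈ Subring.closure G, Δ_[h] u = t • v) ?_ ?_ ?_ ?_ ?_ ?_ hu).2
  · exact fun g hg ↦ ⟨Subring.subset_closure (hshift g hg), hG g hg⟩
  · exact ⟨zero_mem _, 0, zero_mem _, by ext; simp [fwdDiff]⟩
  · exact ⟨one_mem _, 0, zero_mem _, by ext; simp [fwdDiff]⟩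
  · rintro u w - - ⟨hsu, v₁, hv₁, hu⟩ ⟨hsw, v₂, hv₂, hw⟩
    exact ⟨add_mem hsu hsw, v₁ + v₂, add_mem hv₁ hv₂,
      by rw [fwdDiff_add, hu, hw, smul_add]⟩
  · rintro u - ⟨hsu, v, hv, hu⟩
    refine ⟨neg_mem hsu, -v, neg_mem hv, ?_⟩
    ext y
    have e := congrFun hu y
    simp only [fwdDiff, Pi.neg_apply, Pi.smul_apply, smul_eq_mul] at e ⊢
    linear_combination -e
  -- Leibniz rule `Δ (u * w) = u (· + h) * Δ w + Δ u * w`: this is why shifts are carried along.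
  · rintro u w hu hw ⟨hsu, v₁, hv₁, hΔu⟩ ⟨hsw, v₂, hv₂, hΔw⟩
    refine ⟨mul_mem hsu hsw, (fun y ↦ u (y + h)) * v₂ + v₁ * w,
      add_mem (mul_mem hsu hv₂) (mul_mem hv₁ hw), ?_⟩
    ext y
    have e₁ := congrFun hΔu y
    have e₂ := congrFun hΔw y
    simp only [fwdDiff, Pi.smul_apply, smul_eq_mul, Pi.mul_apply, Pi.add_apply] at e₁ e₂ ⊢
    linear_combination u (y + h) * e₂ + w y * e₁

theorem sum_choose_mul_neg_one_pow_eq_neg_fwdDiff_iter (n : ℕ) (u : ℤ → K) :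
    ∑ k ∈ Finset.range (2 * n + 2), ((2 * n + 1).choose k : K) * (-1) ^ k * u (k - n) =
      -(Δ_[1])^[2 * n + 1] u (-n) := by
  rw [fwdDiff_iter_eq_sum_shift, ← Finset.sum_neg_distrib]
  refine Finset.sum_congr rfl fun k hkmem ↦ ?_
  have hk : k ≤ 2 * n + 1 := Nat.lt_succ_iff.1 (Finset.mem_range.1 hkmem)
  have hsign : (-1 : K) ^ (2 * n + 1 - k) * (-1) ^ k = -1 := by
    rw [← pow_add, Nat.sub_add_cancel hk, pow_succ, pow_mul]; simp
  have hsq : (-1 : K) ^ k * (-1) ^ k = 1 := by rw [← mul_pow]; simp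
  rw [zsmul_eq_mul, nsmul_one, neg_add_eq_sub]
  push_cast
  linear_combination (((2 * n + 1).choose k : K) * u (k - n)) *
    ((-1) ^ k * hsign - (-1) ^ (2 * n + 1 - k) * hsq)

end FwdDiff

theorem inv_one_add_zpow_neg {K : Type*} [Field K] {x : K} (hx : x ≠ 0) {j : ℤ}
    (h : 1 + x ^ j ≠ 0) : (1 + x ^ (-j))⁻¹ = 1 - (1 + x ^ j)⁻¹ := by
  have : x ^ j ≠ 0 := zpow_ne_zero j hx
  have : x ^ j + 1 ≠ 0 := by rwa [add_comm]
  rw [zpow_neg]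
  field_simp
  ring

local notation "q" => (RatFunc.X : RatFunc ℚ)

instance : (RingHom.ker (evalRingHom (1 : ℚ))).IsPrime := RingHom.ker_isPrime _

noncomputable def regularAtOne : Subalgebra ℚ[X] (RatFunc ℚ) :=
  Localization.subalgebra.ofField (RatFunc ℚ) (RingHom.ker (evalRingHom (1 : ℚ))).primeCompl
    (Ideal.primeCompl_le_nonZeroDivisors _)

theorem mem_regularAtOne {x : RatFunc ℚ} : x ∈ regularAtOne ↔
    ∃ N D : ℚ[X], D.eval 1 ≠ 0 ∧ x = algebraMap _ _ N * (algebraMap _ _ D)⁻¹ := by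
  change (∃ (N D : ℚ[X]) (_ : D ∉ RingHom.ker (evalRingHom 1)), _) ↔ _
  simp

theorem inv_algebraMap_mem_regularAtOne {D : ℚ[X]} (hD : D.eval 1 ≠ 0) :
    (algebraMap ℚ[X] (RatFunc ℚ) D)⁻¹ ∈ regularAtOne :=
  mem_regularAtOne.2 ⟨1, D, hD, by simp⟩

theorem algebraMap_one_add_X_pow (m : ℕ) :
    algebraMap ℚ[X] (RatFunc ℚ) (1 + X ^ m) = 1 + q ^ m := by
  simp [RatFunc.algebraMap_X]

theorem one_add_X_zpow_ne_zero (j : ℤ) : 1 + q ^ j ≠ 0 := by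
  have hpow (m : ℕ) : 1 + q ^ m ≠ 0 := by
    rw [← algebraMap_one_add_X_pow]
    refine RatFunc.algebraMap_ne_zero fun h ↦ ?_
    simpa using congrArg (eval 1) h
  obtain ⟨m, rfl | rfl⟩ := Int.eq_nat_or_neg j
  · exact_mod_cast hpow m
  · rw [zpow_neg, zpow_natCast]
    have hXm : q ^ m ≠ 0 := pow_ne_zero m RatFunc.X_ne_zero
    have : 1 + q ^ m = q ^ m * (1 + (q ^ m)⁻¹) := by
      field_simp; ring
    exact fun h ↦ hpow m (by rw [this, h, mul_zero])

theorem X_zpow_mem_regularAtOne (j : ℤ) : q ^ j ∈ regularAtOne := by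
  have hX : q ∈ regularAtOne := by
    rw [← RatFunc.algebraMap_X]; exact Subalgebra.algebraMap_mem _ _
  obtain ⟨m, rfl | rfl⟩ := Int.eq_nat_or_neg j
  · exact_mod_cast pow_mem hX m
  · rw [zpow_neg, zpow_natCast, ← RatFunc.algebraMap_X, ← map_pow]
    exact inv_algebraMap_mem_regularAtOne (by simp)

theorem inv_one_add_X_zpow_mem_regularAtOne (j : ℤ) :
    (1 + q ^ j)⁻¹ ∈ regularAtOne := by
  have hpow (m : ℕ) : (1 + q ^ m)⁻¹ ∈ regularAtOne := by
    rw [← algebraMap_one_add_X_pow]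
    exact inv_algebraMap_mem_regularAtOne (by norm_num)
  obtain ⟨m, rfl | rfl⟩ := Int.eq_nat_or_neg j
  · exact_mod_cast hpow m
  · rw [inv_one_add_zpow_neg RatFunc.X_ne_zero (one_add_X_zpow_ne_zero m)]
    exact sub_mem (one_mem _) (by exact_mod_cast hpow m)

theorem prod_one_add_X_pow_mem_regularAtOne (N : ℕ) :
    ∏ i ∈ Finset.range N, (1 + q ^ i) ∈ regularAtOne :=
  Subalgebra.prod_mem _ fun i _ ↦ by
    rw [← algebraMap_one_add_X_pow]; exact Subalgebra.algebraMap_mem _ _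

def qSequenceGenerators : Set (ℤ → RatFunc ℚ) :=
  Set.range (fun (c j : ℤ) ↦ q ^ (j + c)) ∪
    Set.range (fun (c j : ℤ) ↦ (1 + q ^ (j + c))⁻¹)

theorem fwdDiff_X_zpow_add (c : ℤ) :
    Δ_[1] (fun j : ℤ ↦ q ^ (j + c)) = (q - 1) • fun j ↦ q ^ (j + c) := by
  ext j
  simp only [fwdDiff, Pi.smul_apply, smul_eq_mul]
  rw [add_right_comm, zpow_add_one₀ RatFunc.X_ne_zero]
  ring

theorem fwdDiff_inv_one_add_X_zpow_add (c : ℤ) :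
    Δ_[1] (fun j : ℤ ↦ (1 + q ^ (j + c))⁻¹) =
      (q - 1) • -((fun j ↦ q ^ (j + c)) *
        (fun j ↦ (1 + q ^ (j + c))⁻¹) * fun j ↦ (1 + q ^ (j + (c + 1)))⁻¹) := by
  ext j
  have h₀ := one_add_X_zpow_ne_zero (j + c)
  have h₁ := one_add_X_zpow_ne_zero (j + c + 1)
  simp only [fwdDiff, Pi.smul_apply, smul_eq_mul, Pi.neg_apply, Pi.mul_apply]
  rw [add_right_comm j 1 c, ← add_assoc]
  rw [zpow_add_one₀ RatFunc.X_ne_zero] at h₁ ⊢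
  field_simp
  ring

theorem exists_fwdDiff_iter_inv_one_add_X_zpow_eq (m : ℕ) :
    ∃ w : ℤ → RatFunc ℚ, (∀ j, w j ∈ regularAtOne) ∧
      (Δ_[1])^[m] (fun j : ℤ ↦ (1 + q ^ j)⁻¹) = (q - 1) ^ m • w := by
  set G := qSequenceGenerators
  have hshift : ∀ g ∈ G, (fun j ↦ g (j + 1)) ∈ G := by
    rintro _ (⟨c, rfl⟩ | ⟨c, rfl⟩)
    · exact Or.inl ⟨c + 1, by ext j; simp only [add_assoc, add_comm c]⟩
    · exact Or.inr ⟨c + 1, by ext j; simp only [add_assoc, add_comm c]⟩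
  have hG : ∀ g ∈ G, ∃ v ∈ Subring.closure G, Δ_[1] g = (q - 1) • v := by
    have hX (c : ℤ) : (fun j : ℤ ↦ q ^ (j + c)) ∈ Subring.closure G :=
      Subring.subset_closure (Or.inl ⟨c, rfl⟩)
    have hH (c : ℤ) : (fun j : ℤ ↦ (1 + q ^ (j + c))⁻¹) ∈ Subring.closure G :=
      Subring.subset_closure (Or.inr ⟨c, rfl⟩)
    rintro _ (⟨c, rfl⟩ | ⟨c, rfl⟩)
    · exact ⟨_, hX c, fwdDiff_X_zpow_add c⟩
    · exact ⟨_, neg_mem (mul_mem (mul_mem (hX c) (hH c)) (hH (c + 1))),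
        fwdDiff_inv_one_add_X_zpow_add c⟩
  have hregular :
      Subring.closure G ≤ (Subalgebra.pi Set.univ fun _ ↦ regularAtOne).toSubring := by
    refine Subring.closure_le.2 ?_
    rintro _ (⟨c, rfl⟩ | ⟨c, rfl⟩) j -
    exacts [X_zpow_mem_regularAtOne _, inv_one_add_X_zpow_mem_regularAtOne _]
  have hmem : (fun j : ℤ ↦ (1 + q ^ j)⁻¹) ∈ Subring.closure G :=
    Subring.subset_closure (Or.inr ⟨0, by simp only [add_zero]⟩)
  obtain ⟨w, hw, hΔ⟩ := exists_fwdDiff_iter_eq_pow_smul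
    (fun u hu ↦ exists_fwdDiff_eq_smul_of_mem_closure hshift hG hu) m hmem
  exact ⟨w, fun j ↦ hregular hw j trivial, hΔ⟩

theorem toRat_X : toRat X = q := by
  simp [toRat, RatFunc.algebraMap_X]

theorem toRat_one_add_X_pow (i : ℕ) : toRat (1 + X ^ i) = 1 + q ^ i := by
  simp [toRat, RatFunc.algebraMap_X]

theorem prod_one_add_X_pow_mul_inv_mem_range {N : ℕ} {j : ℤ} (hj : j.natAbs < N) :
    (∏ i ∈ Finset.range N, (1 + q ^ i)) * (1 + q ^ j)⁻¹ ∈ toRat.range := by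
  have hnat {i : ℕ} (hi : i < N) :
      (∏ i ∈ Finset.range N, (1 + q ^ i)) * (1 + q ^ i)⁻¹ ∈ toRat.range := by
    refine ⟨∏ k ∈ (Finset.range N).erase i, (1 + X ^ k), ?_⟩
    rw [← Finset.mul_prod_erase _ _ (Finset.mem_range.2 hi), map_prod, mul_right_comm,
      mul_inv_cancel₀ (by exact_mod_cast one_add_X_zpow_ne_zero i), one_mul]
    exact Finset.prod_congr rfl fun k _ ↦ toRat_one_add_X_pow k
  obtain ⟨m, rfl | rfl⟩ := Int.eq_nat_or_neg j
  · exact_mod_cast hnat hj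
  · rw [inv_one_add_zpow_neg RatFunc.X_ne_zero (one_add_X_zpow_ne_zero m), mul_sub, mul_one]
    refine sub_mem ⟨∏ k ∈ Finset.range N, (1 + X ^ k), ?_⟩
      (by exact_mod_cast hnat (by simpa using hj))
    rw [map_prod]
    exact Finset.prod_congr rfl fun k _ ↦ toRat_one_add_X_pow k

theorem prod_mul_sum_mem_range (n : ℕ) :
    (∏ i ∈ Finset.range (n + 2), (1 + q ^ i)) *
      (∑ k ∈ Finset.range (2 * n + 2),
        ((2 * n + 1).choose k : RatFunc ℚ) * (-1) ^ k / (1 + q ^ ((k : ℤ) - (n : ℤ)))) ∈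
      toRat.range := by
  rw [Finset.mul_sum]
  refine Subring.sum_mem _ fun k hk ↦ ?_
  rw [div_eq_mul_inv, mul_left_comm]
  refine Subring.mul_mem _ (Subring.mul_mem _ (natCast_mem _ _) (pow_mem (neg_mem (one_mem _)) _))
    (prod_one_add_X_pow_mul_inv_mem_range ?_)
  have := Finset.mem_range.1 hk
  omega

theorem X_sub_one_pow_dvd_of_toRat_eq {g : ℤ[X]} {m : ℕ} {r : RatFunc ℚ}
    (hr : r ∈ regularAtOne) (hg : toRat g = (q - 1) ^ m * r) : (X - 1) ^ m ∣ g := by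
  obtain ⟨N, D, hD, rfl⟩ := mem_regularAtOne.1 hr
  have hD0 : algebraMap ℚ[X] (RatFunc ℚ) D ≠ 0 :=
    RatFunc.algebraMap_ne_zero (by rintro rfl; simp at hD)
  have hQ : g.map (Int.castRingHom ℚ) * D = (X - C 1) ^ m * N := by
    apply IsFractionRing.injective ℚ[X] (RatFunc ℚ)
    have : toRat g = algebraMap ℚ[X] (RatFunc ℚ) (g.map (Int.castRingHom ℚ)) := rfl
    rw [map_mul, ← this, hg, map_mul, map_pow, map_sub, RatFunc.algebraMap_X, C_1, map_one,
      mul_assoc, inv_mul_cancel_right₀ hD0]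
  have hcop : IsCoprime ((X - C 1) ^ m) D :=
    ((irreducible_X_sub_C 1).coprime_iff_not_dvd.2 (by rwa [dvd_iff_isRoot])).pow_left
  rw [← C_1, ← map_dvd_map (Int.castRingHom ℚ) Int.cast_injective ((monic_X_sub_C 1).pow m)]
  simpa using hcop.dvd_of_dvd_mul_right ⟨N, hQ⟩

theorem exists_sum_eq_X_sub_one_pow_mul (n : ℕ) :
    ∃ r ∈ regularAtOne, ∑ k ∈ Finset.range (2 * n + 2),
      ((2 * n + 1).choose k : RatFunc ℚ) * (-1) ^ k / (1 + q ^ ((k : ℤ) - (n : ℤ))) =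
      (q - 1) ^ (2 * n + 1) * r := by
  obtain ⟨w, hw, hΔ⟩ := exists_fwdDiff_iter_inv_one_add_X_zpow_eq (2 * n + 1)
  refine ⟨-w (-n), neg_mem (hw _), ?_⟩
  simp_rw [div_eq_mul_inv]
  rw [sum_choose_mul_neg_one_pow_eq_neg_fwdDiff_iter n fun j : ℤ ↦ (1 + q ^ j)⁻¹, hΔ,
    mul_neg]
  rfl

/-- Let `f_n(q) = ∑_{k=0}^{2n+1} binom(2n+1,k)(-1)^k/(1+q^{k-n})` as a
rational function of `q`. Then
`d_n(q) = (-1)^{n+1} (-1;q)_{n+2} f_n(q)/(1-q)^{2n+1}`, where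
`(-1;q)_{n+2} = ∏_{i=0}^{n+1}(1+q^i)`, is a polynomial with integer coefficients. -/
theorem doubloon_dn_integral (n : ℕ) :
    ∃ p : Polynomial ℤ,
      ((-1 : RatFunc ℚ) ^ (n + 1) * (∏ i ∈ Finset.range (n + 2), (1 + RatFunc.X ^ i)) *
          (∑ k ∈ Finset.range (2 * n + 2),
            ((2 * n + 1).choose k : RatFunc ℚ) * (-1) ^ k /
              (1 + RatFunc.X ^ ((k : ℤ) - (n : ℤ))))) /
        (1 - RatFunc.X) ^ (2 * n + 1) = toRat p := by
  obtain ⟨r, hr, hf⟩ := exists_sum_eq_X_sub_one_pow_mul n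
  obtain ⟨g, hg⟩ := prod_mul_sum_mem_range n
  obtain ⟨p, rfl⟩ := X_sub_one_pow_dvd_of_toRat_eq (m := 2 * n + 1)
    (mul_mem (prod_one_add_X_pow_mem_regularAtOne (n + 2)) hr) (by rw [hg, hf]; ring)
  refine ⟨(-1) ^ n * p, ?_⟩
  have hodd : (1 - q) ^ (2 * n + 1) = -(q - 1) ^ (2 * n + 1) := by
    rw [← neg_sub, Odd.neg_pow ⟨n, rfl⟩]
  have hne : (q - 1) ^ (2 * n + 1) ≠ 0 := pow_ne_zero _ <| sub_ne_zero.2 fun h ↦ by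
    simpa using congrArg RatFunc.intDegree h
  rw [hodd, div_eq_iff (neg_ne_zero.2 hne), mul_assoc, ← hg]
  simp only [map_mul, map_pow, map_neg, map_one, map_sub, toRat_X]
  ring
end

section
/- The type B q-Eulerian coefficients B_{n,k}(q) satisfy the recurrence B_{n,k}(q) = [2k+1]_q B_{n-1,k}(q) + q^{2k-1} [2n-2k+1]_q B_{n-1,k-1}(q) for 1 ≤ k ≤ n. -/
open PowerSeries Finset

lemma one_sub_X_mul_qint (m : ℕ) : (1 - Polynomial.X) * qint m = 1 - Polynomial.X ^ m := by
  rw [qint, mul_comm, geom_sum_mul_neg]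

namespace PowerSeries

variable {R : Type*} [CommRing R]

lemma rescale_C_s14 (r a : R) : rescale r (C a) = C a := by
  ext n
  cases n <;> simp [coeff_rescale, coeff_C]

lemma rescale_one_sub_C_mul_X (r a : R) : rescale r (1 - C a * X) = 1 - C (a * r) * X := by
  rw [map_sub, map_one, map_mul, rescale_C_s14, rescale_X, ← mul_assoc, ← map_mul]

lemma prod_range_succ_one_sub_C_pow_mul_X (r : R) (m : ℕ) :
    ∏ i ∈ range (m + 1), (1 - C (r ^ i) * X) =
      (1 - X) * rescale r (∏ i ∈ range m, (1 - C (r ^ i) * X)) := by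
  simp only [map_prod, rescale_one_sub_C_mul_X, ← pow_succ, prod_range_succ' _ m, pow_zero,
    map_one, one_mul]
  ring

end PowerSeries

/-- `∑_{j ≥ 0} [2j+1]_q^n t^j`. -/
noncomputable def oddQIntPowSeries (n : ℕ) : PowerSeries (Polynomial ℤ) :=
  mk fun j => qint (2 * j + 1) ^ n

/-- `(t; q²)_{n+1}`. -/
noncomputable def qSqPochhammer (n : ℕ) : PowerSeries (Polynomial ℤ) :=
  ∏ i ∈ range (n + 1), (1 - C (Polynomial.X ^ (2 * i)) * X)

/-- `B_n(t, q)`, read off from its defining relation as a power series in `t`. -/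
noncomputable def typeBSeries (n : ℕ) : PowerSeries (Polynomial ℤ) :=
  oddQIntPowSeries n * qSqPochhammer n

lemma C_one_sub_X_mul_oddQIntPowSeries_succ (n : ℕ) :
    C (1 - Polynomial.X) * oddQIntPowSeries (n + 1) =
      oddQIntPowSeries n - C Polynomial.X * rescale (Polynomial.X ^ 2) (oddQIntPowSeries n) := by
  ext1 j
  rw [coeff_C_mul]
  simp only [map_sub, coeff_C_mul, oddQIntPowSeries, rescale_mk, coeff_mk]
  linear_combination qint (2 * j + 1) ^ n * one_sub_X_mul_qint (2 * j + 1)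

lemma qSqPochhammer_succ (n : ℕ) :
    qSqPochhammer (n + 1) = qSqPochhammer n * (1 - C (Polynomial.X ^ (2 * (n + 1))) * X) :=
  prod_range_succ _ _

lemma qSqPochhammer_succ' (n : ℕ) :
    qSqPochhammer (n + 1) = (1 - X) * rescale (Polynomial.X ^ 2) (qSqPochhammer n) := by
  simp only [qSqPochhammer, pow_mul]
  exact prod_range_succ_one_sub_C_pow_mul_X _ _

lemma C_one_sub_X_mul_typeBSeries_succ (n : ℕ) :
    C (1 - Polynomial.X) * typeBSeries (n + 1) =
      (1 - C (Polynomial.X ^ (2 * (n + 1))) * X) * typeBSeries n -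
        C Polynomial.X * ((1 - X) * rescale (Polynomial.X ^ 2) (typeBSeries n)) := by
  rw [typeBSeries, typeBSeries, map_mul]
  linear_combination qSqPochhammer (n + 1) * C_one_sub_X_mul_oddQIntPowSeries_succ n +
    oddQIntPowSeries n * qSqPochhammer_succ n -
    C Polynomial.X * rescale (Polynomial.X ^ 2) (oddQIntPowSeries n) * qSqPochhammer_succ' n

lemma coeff_succ_typeBSeries_add_succ (k d : ℕ) :
    coeff (k + 1) (typeBSeries (k + d + 1)) =
      qint (2 * (k + 1) + 1) * coeff (k + 1) (typeBSeries (k + d)) +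
        Polynomial.X ^ (2 * k + 1) * qint (2 * d + 1) * coeff k (typeBSeries (k + d)) := by
  have h := congrArg (coeff (k + 1)) (C_one_sub_X_mul_typeBSeries_succ (k + d))
  simp only [coeff_C_mul, sub_mul, one_mul, map_sub, coeff_succ_X_mul, mul_sub, mul_assoc,
    coeff_rescale] at h
  have hq : (1 - Polynomial.X : Polynomial ℤ) ≠ 0 := by
    intro hzero
    simpa [Polynomial.coeff_one] using congrArg (Polynomial.coeff · 1) hzero
  apply mul_left_cancel₀ hq
  linear_combination h -
    coeff (k + 1) (typeBSeries (k + d)) * one_sub_X_mul_qint (2 * (k + 1) + 1) -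
    Polynomial.X ^ (2 * k + 1) * coeff k (typeBSeries (k + d)) * one_sub_X_mul_qint (2 * d + 1)

/-- Chow–Gessel's type B q-Eulerian coefficients `B_{n,k}(q)`, where
`B_n(t,q) = ∑_{k=0}^n B_{n,k}(q) t^k` is defined by
`∑_{j≥0} [2j+1]_q^n t^j = B_n(t,q)/(t;q²)_{n+1}`, satisfy
`B_{n,k}(q) = [2k+1]_q B_{n-1,k}(q) + q^{2k-1} [2n-2k+1]_q B_{n-1,k-1}(q)` for
`1 ≤ k ≤ n`. -/
theorem chowGessel_qEulerianB_recurrence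
    (B : ℕ → Polynomial (Polynomial ℤ))
    (hB : ∀ n, ((B n : PowerSeries (Polynomial ℤ)) =
      PowerSeries.mk (fun j => (qint (2 * j + 1)) ^ n) *
        ∏ i ∈ Finset.range (n + 1),
          (1 - PowerSeries.C (R := Polynomial ℤ) (Polynomial.X ^ (2 * i)) * PowerSeries.X))) :
    ∀ n k, 1 ≤ k → k ≤ n →
      (B n).coeff k = qint (2 * k + 1) * (B (n - 1)).coeff k +
        Polynomial.X ^ (2 * k - 1) * qint (2 * n - 2 * k + 1) * (B (n - 1)).coeff (k - 1) := by
  have hcoeff (n k : ℕ) : (B n).coeff k = coeff k (typeBSeries n) := by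
    rw [← Polynomial.coeff_coe, hB n, typeBSeries, oddQIntPowSeries, qSqPochhammer]
  intro n k hk hkn
  obtain ⟨k, rfl⟩ : ∃ k', k = k' + 1 := ⟨k - 1, by omega⟩
  obtain ⟨d, rfl⟩ : ∃ d, n = k + d + 1 := ⟨n - (k + 1), by omega⟩
  rw [show k + d + 1 - 1 = k + d by omega, show 2 * (k + 1) - 1 = 2 * k + 1 by omega,
    show 2 * (k + d + 1) - 2 * (k + 1) + 1 = 2 * d + 1 by omega, Nat.add_sub_cancel,
    hcoeff, hcoeff, hcoeff]
  exact coeff_succ_typeBSeries_add_succ k d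
end

section
/- For all q and integers n, s, k with 0 ≤ s ≤ k, the identity [n-2s]_{q^2}[2s+1]_q + [n-k-s]_{q^2}(1+q)(1+q^{2s+1})[k-s]_{q^2} = [2k+1]_q [n-k-s]_{q^2} + [2n+1-2k]_q [k-s]_{q^2} holds as an identity of polynomials in q. -/
/-!
Writing `a = q^{2n}`, `b = q^{2s}`, `c = q^{2k}`, every `q`-integer in the identity becomes a
rational expression in `q, a, b, c` whose only denominators are `1 - q`, `1 - q²`, `b` and `c`.
Clearing them turns the identity into a polynomial identity, so it holds in any field for any
`q ≠ 0` with `q² ≠ 1`, and for all integers `n, s, k`; the generic point `q = X` of `ℚ(X)` is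
such a `q`.
-/

/-- The `q`-integer `[m]_q = (1-q^m)/(1-q)` for an arbitrary integer `m`, as a rational
function of `q` (for `m ≥ 0` this is the polynomial `1 + q + ⋯ + q^{m-1}`). -/
noncomputable def qintZ (m : ℤ) : RatFunc ℚ := (1 - RatFunc.X ^ m) / (1 - RatFunc.X)

/-- The `q²`-integer `[m]_{q²} = (1-q^{2m})/(1-q²)` for an arbitrary integer `m`. -/
noncomputable def qintZ2 (m : ℤ) : RatFunc ℚ :=
  (1 - RatFunc.X ^ (2 * m)) / (1 - RatFunc.X ^ 2)

theorem qint_identity_typeB_of_field {K : Type*} [Field K] {q : K} (hq₀ : q ≠ 0)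
    (hq : q ^ 2 ≠ 1) (n s k : ℤ) :
    (1 - q ^ (2 * (n - 2 * s))) / (1 - q ^ 2) * ((1 - q ^ (2 * s + 1)) / (1 - q)) +
      (1 - q ^ (2 * (n - k - s))) / (1 - q ^ 2) * (1 + q) * (1 + q ^ (2 * s + 1)) *
        ((1 - q ^ (2 * (k - s))) / (1 - q ^ 2)) =
    (1 - q ^ (2 * k + 1)) / (1 - q) * ((1 - q ^ (2 * (n - k - s))) / (1 - q ^ 2)) +
      (1 - q ^ (2 * n + 1 - 2 * k)) / (1 - q) * ((1 - q ^ (2 * (k - s))) / (1 - q ^ 2)) := by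
  have h₁ : 1 - q ≠ 0 := sub_ne_zero.mpr fun h => hq (by rw [← h, one_pow])
  have h₂ : 1 - q ^ 2 ≠ 0 := sub_ne_zero.mpr (Ne.symm hq)
  have hb : q ^ (2 * s) ≠ 0 := zpow_ne_zero _ hq₀
  have hc : q ^ (2 * k) ≠ 0 := zpow_ne_zero _ hq₀
  rw [show 2 * (n - 2 * s) = 2 * n - 2 * s - 2 * s by ring,
    show 2 * (n - k - s) = 2 * n - 2 * k - 2 * s by ring,
    show 2 * (k - s) = 2 * k - 2 * s by ring,
    show 2 * n + 1 - 2 * k = 2 * n - 2 * k + 1 by ring]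
  simp only [zpow_sub₀ hq₀, zpow_add₀ hq₀, zpow_one]
  field_simp
  ring

theorem RatFunc.X_sq_ne_one {K : Type*} [Field K] : (RatFunc.X : RatFunc K) ^ 2 ≠ 1 := by
  rw [← RatFunc.algebraMap_X, ← map_pow, ← map_one (algebraMap (Polynomial K) (RatFunc K)),
    (RatFunc.algebraMap_injective K).ne_iff]
  intro h
  simpa using congrArg Polynomial.natDegree h

theorem qint_identity_typeB_general (n s k : ℤ) :
    qintZ2 (n - 2 * s) * qintZ (2 * s + 1) +
      qintZ2 (n - k - s) * (1 + RatFunc.X) * (1 + RatFunc.X ^ (2 * s + 1)) * qintZ2 (k - s) =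
    qintZ (2 * k + 1) * qintZ2 (n - k - s) + qintZ (2 * n + 1 - 2 * k) * qintZ2 (k - s) :=
  qint_identity_typeB_of_field RatFunc.X_ne_zero RatFunc.X_sq_ne_one n s k

/-- For all integers `n, s, k` with `0 ≤ s ≤ k`, the identity
`[n-2s]_{q²}[2s+1]_q + [n-k-s]_{q²}(1+q)(1+q^{2s+1})[k-s]_{q²}
  = [2k+1]_q [n-k-s]_{q²} + [2n+1-2k]_q [k-s]_{q²}`
holds identically in `q`. -/
theorem qint_identity_typeB (n s k : ℤ) (hs : 0 ≤ s) (hsk : s ≤ k) :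
    qintZ2 (n - 2 * s) * qintZ (2 * s + 1) +
      qintZ2 (n - k - s) * (1 + RatFunc.X) * (1 + RatFunc.X ^ (2 * s + 1)) * qintZ2 (k - s) =
    qintZ (2 * k + 1) * qintZ2 (n - k - s) + qintZ (2 * n + 1 - 2 * k) * qintZ2 (k - s) :=
  qint_identity_typeB_general n s k
end

section
/- For n ≥ 1, B_n(t,q)/(t;q^2)_{n+1} = (1-q)^{-n} sum_{k=0}^{n} binom(n,k) (-q)^k / (1 - t q^{2k}) as rational functions, and consequently the q-secant number E*_{2n}(q) := (-1)^n q^{n(n+1)} B_{2n}(-q^{-2n-1}, q) equals (-1)^n q^{n(n+1)} (-q^{-2n-1};q^2)_{2n+1} (1-q)^{-2n} sum_{k=0}^{2n} binom(2n,k) (-q)^k/(1+q^{2k-2n-1}). -/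
/-- The inclusion of `(ℤ[q])[t]` into the two-variable rational function field
`ℚ(q)(t)`, sending `t` to the outer variable `X` and `q` to `C X`. -/
noncomputable def toRat2 : Polynomial (Polynomial ℤ) →+* RatFunc (RatFunc ℚ) :=
  Polynomial.eval₂RingHom ((RatFunc.C : RatFunc ℚ →+* RatFunc (RatFunc ℚ)).comp toRat) RatFunc.X


/-!
Since `[2j+1]_q (1 - q) = 1 - q^{2j+1}`, the binomial theorem turns `(1 - q)^n ∑_j [2j+1]_q^n t^j`
into `∑_k binom(n,k) (-q)^k ∑_j (q^{2k} t)^j`, a combination of geometric series in `t`.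
Multiplying by `(t;q²)_{n+1}` clears every one of them, leaving the polynomial identity
`(1 - q)^n B_n(t,q) = ∑_k binom(n,k) (-q)^k ∏_{i ≠ k} (1 - t q^{2i})`. It may be evaluated at
any `t` where no factor `1 - t q^{2i}` vanishes: at `t` itself this is the partial fraction
expansion, and at `t = -q^{-2n-1}` the factors become `1 + q^{2i-2n-1}`.
-/

open Finset
open scoped Polynomial PowerSeries

theorem PowerSeries.mk_pow_mul_one_sub_C_mul_X {R : Type*} [CommRing R] (c : R) :
    PowerSeries.mk (fun j => c ^ j) * (1 - PowerSeries.C c * PowerSeries.X) = 1 := by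
  simpa [PowerSeries.rescale_mk, PowerSeries.rescale_X] using
    congrArg (PowerSeries.rescale c) (PowerSeries.mk_one_mul_one_sub_eq_one R)

theorem RatFunc.one_add_X_zpow_ne_zero {K : Type*} [Field K] {e : ℤ} (he : e ≠ 0) :
    (1 + RatFunc.X ^ e : RatFunc K) ≠ 0 := by
  intro h
  have hAlg : IsAlgebraic K ((RatFunc.X : RatFunc K) ^ e) := by
    rw [eq_neg_of_add_eq_zero_right h]
    exact isAlgebraic_one.neg
  obtain ⟨m, rfl | rfl⟩ := Int.eq_nat_or_neg e <;>
    simp only [zpow_neg, IsAlgebraic.inv_iff, zpow_natCast] at hAlg <;>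
    exact RatFunc.transcendental_X.pow (by omega) hAlg

theorem RatFunc.one_sub_C_mul_X_ne_zero {K : Type*} [Field K] (a : K) :
    (1 - RatFunc.C a * RatFunc.X : RatFunc K) ≠ 0 := by
  have : (1 - Polynomial.C a * Polynomial.X : Polynomial K) ≠ 0 := fun h => by
    simpa using congrArg (Polynomial.coeff · 0) h
  simpa [RatFunc.algebraMap_C] using RatFunc.algebraMap_ne_zero this

theorem RatFunc.one_sub_X_ne_zero {K : Type*} [Field K] : (1 - RatFunc.X : RatFunc K) ≠ 0 :=
  sub_ne_zero.mpr fun h => by simpa using congrArg RatFunc.intDegree h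

theorem Finset.sum_mul_prod_erase_eq_prod_mul_sum_div {ι K : Type*} [DecidableEq ι] [Field K]
    (s : Finset ι) (a d : ι → K) (hd : ∀ i ∈ s, d i ≠ 0) :
    ∑ k ∈ s, a k * ∏ i ∈ s.erase k, d i = (∏ i ∈ s, d i) * ∑ k ∈ s, a k / d k := by
  rw [mul_sum]
  refine sum_congr rfl fun k hk => ?_
  rw [← mul_prod_erase s d hk]
  field_simp [hd k hk]

section

variable {R : Type*} [CommRing R]

theorem PowerSeries.mk_geom_sum_odd_pow_mul_C (c : R) (n : ℕ) :
    PowerSeries.mk (fun j => (∑ i ∈ range (2 * j + 1), c ^ i) ^ n) *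
        PowerSeries.C ((1 - c) ^ n) =
      ∑ k ∈ range (n + 1),
        PowerSeries.C ((n.choose k : R) * (-c) ^ k) *
          PowerSeries.mk (fun j => (c ^ (2 * k)) ^ j) := by
  ext j
  simp only [PowerSeries.coeff_mul_C, PowerSeries.coeff_mk, map_sum, PowerSeries.coeff_C_mul]
  rw [← mul_pow, geom_sum_mul_neg, sub_eq_neg_add, add_pow]
  refine sum_congr rfl fun k _ => ?_
  ring

theorem Polynomial.mul_C_one_sub_pow_eq_sum_prod_erase {P : R[X]} {c : R} {n : ℕ}
    (hP : (P : R⟦X⟧) = PowerSeries.mk (fun j => (∑ i ∈ range (2 * j + 1), c ^ i) ^ n) *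
      ∏ i ∈ range (n + 1), (1 - PowerSeries.C (c ^ (2 * i)) * PowerSeries.X)) :
    P * Polynomial.C ((1 - c) ^ n) =
      ∑ k ∈ range (n + 1), Polynomial.C ((n.choose k : R) * (-c) ^ k) *
        ∏ i ∈ (range (n + 1)).erase k, (1 - Polynomial.C (c ^ (2 * i)) * Polynomial.X) := by
  apply Polynomial.coe_injective R
  rw [← Polynomial.coeToPowerSeries.ringHom_apply, ← Polynomial.coeToPowerSeries.ringHom_apply]
  simp only [map_mul, map_sum, map_prod, map_sub, map_one,
    Polynomial.coeToPowerSeries.ringHom_apply, Polynomial.coe_C, Polynomial.coe_X]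
  rw [hP, mul_right_comm, PowerSeries.mk_geom_sum_odd_pow_mul_C, sum_mul]
  refine sum_congr rfl fun k hk => ?_
  rw [← mul_prod_erase _ _ hk, ← mul_assoc, mul_assoc _ (PowerSeries.mk _),
    PowerSeries.mk_pow_mul_one_sub_C_mul_X, mul_one, map_mul]

theorem Polynomial.eval₂_mul_one_sub_pow_eq_prod_mul_sum_div {K : Type*} [Field K]
    (f : R →+* K) (x : K) {P : R[X]} {c : R} {n : ℕ}
    (hP : (P : R⟦X⟧) = PowerSeries.mk (fun j => (∑ i ∈ range (2 * j + 1), c ^ i) ^ n) *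
      ∏ i ∈ range (n + 1), (1 - PowerSeries.C (c ^ (2 * i)) * PowerSeries.X))
    (hx : ∀ i ∈ range (n + 1), 1 - f c ^ (2 * i) * x ≠ 0) :
    P.eval₂ f x * (1 - f c) ^ n =
      (∏ i ∈ range (n + 1), (1 - f c ^ (2 * i) * x)) *
        ∑ k ∈ range (n + 1), (n.choose k : K) * (-f c) ^ k / (1 - f c ^ (2 * k) * x) := by
  have h := congrArg (Polynomial.eval₂RingHom f x)
    (Polynomial.mul_C_one_sub_pow_eq_sum_prod_erase hP)
  simp only [map_mul, map_sum, map_prod, map_sub, map_one, map_pow, map_neg, map_natCast,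
    Polynomial.coe_eval₂RingHom, Polynomial.eval₂_C, Polynomial.eval₂_X] at h
  rw [h, Finset.sum_mul_prod_erase_eq_prod_mul_sum_div _ _ _ hx]

end

theorem toRat_X_s18 : toRat Polynomial.X = RatFunc.X := by
  simp [toRat, RatFunc.algebraMap_X]

/-- For `n ≥ 1`, as rational functions,
`B_n(t,q)/(t;q²)_{n+1} = (1-q)^{-n} ∑_{k=0}^n binom(n,k)(-q)^k/(1-tq^{2k})`, and
consequently the q-secant number `E*_{2n}(q) := (-1)^n q^{n(n+1)} B_{2n}(-q^{-2n-1},q)`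
equals `(-1)^n q^{n(n+1)} (-q^{-2n-1};q²)_{2n+1} (1-q)^{-2n}
∑_{k=0}^{2n} binom(2n,k)(-q)^k/(1+q^{2k-2n-1})`. Here `B_n(t,q)` is Chow–Gessel's
type B q-Eulerian polynomial, defined by `∑_{j≥0} [2j+1]_q^n t^j = B_n(t,q)/(t;q²)_{n+1}`. -/
theorem chowGessel_partial_fractions
    (B : ℕ → Polynomial (Polynomial ℤ))
    (hB : ∀ n, ((B n : PowerSeries (Polynomial ℤ)) =
      PowerSeries.mk (fun j => (qint (2 * j + 1)) ^ n) *
        ∏ i ∈ Finset.range (n + 1),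
          (1 - PowerSeries.C (R := Polynomial ℤ) (Polynomial.X ^ (2 * i)) * PowerSeries.X))) :
    (∀ n : ℕ, 1 ≤ n →
      toRat2 (B n) /
          ∏ i ∈ Finset.range (n + 1),
            (1 - RatFunc.C ((RatFunc.X : RatFunc ℚ) ^ (2 * i)) * RatFunc.X) =
        (∑ k ∈ Finset.range (n + 1),
          (n.choose k : RatFunc (RatFunc ℚ)) * (-(RatFunc.C (RatFunc.X : RatFunc ℚ))) ^ k /
            (1 - RatFunc.C ((RatFunc.X : RatFunc ℚ) ^ (2 * k)) * RatFunc.X)) /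
          (1 - RatFunc.C (RatFunc.X : RatFunc ℚ)) ^ n) ∧
    (∀ n : ℕ, 1 ≤ n →
      (-1 : RatFunc ℚ) ^ n * RatFunc.X ^ (n * (n + 1)) *
          Polynomial.eval₂ toRat (-(RatFunc.X ^ (-(2 * (n : ℤ) + 1)))) (B (2 * n)) =
        (-1 : RatFunc ℚ) ^ n * RatFunc.X ^ (n * (n + 1)) *
          (∏ i ∈ Finset.range (2 * n + 1), (1 + RatFunc.X ^ (2 * (i : ℤ) - 2 * n - 1))) *
          (∑ k ∈ Finset.range (2 * n + 1),
            ((2 * n).choose k : RatFunc ℚ) * (-RatFunc.X) ^ k /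
              (1 + RatFunc.X ^ (2 * (k : ℤ) - 2 * n - 1))) /
          (1 - RatFunc.X) ^ (2 * n)) := by
  refine ⟨fun n _ => ?_, fun n _ => ?_⟩
  · have hd (i : ℕ) : 1 - RatFunc.C ((RatFunc.X : RatFunc ℚ) ^ i) * RatFunc.X ≠ 0 :=
      RatFunc.one_sub_C_mul_X_ne_zero _
    have h := Polynomial.eval₂_mul_one_sub_pow_eq_prod_mul_sum_div (RatFunc.C.comp toRat)
      RatFunc.X (hB n) (fun i _ => by simpa [toRat_X_s18] using hd (2 * i))
    simp only [RingHom.comp_apply, toRat_X_s18, ← map_pow] at h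
    have hq : (1 - RatFunc.C (RatFunc.X : RatFunc ℚ) : RatFunc (RatFunc ℚ)) ≠ 0 := by
      simpa using (map_ne_zero RatFunc.C).mpr (RatFunc.one_sub_X_ne_zero (K := ℚ))
    rw [div_eq_div_iff (prod_ne_zero_iff.mpr fun i _ => hd _) (pow_ne_zero _ hq)]
    exact h.trans (mul_comm _ _)
  · have hfac (i : ℕ) :
        1 - (RatFunc.X : RatFunc ℚ) ^ (2 * i) * -RatFunc.X ^ (-(2 * (n : ℤ) + 1)) =
          1 + RatFunc.X ^ (2 * (i : ℤ) - 2 * n - 1) := by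
      rw [mul_neg, sub_neg_eq_add, ← zpow_natCast, ← zpow_add₀ RatFunc.X_ne_zero]
      push_cast
      ring_nf
    have h := Polynomial.eval₂_mul_one_sub_pow_eq_prod_mul_sum_div toRat
      (-RatFunc.X ^ (-(2 * (n : ℤ) + 1))) (hB (2 * n))
      fun i _ => by
        rw [toRat_X_s18, hfac]
        exact RatFunc.one_add_X_zpow_ne_zero (e := 2 * (i : ℤ) - 2 * n - 1) (by omega)
    simp only [toRat_X_s18, hfac] at h
    rw [eq_div_iff (pow_ne_zero _ RatFunc.one_sub_X_ne_zero)]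
    linear_combination (-1 : RatFunc ℚ) ^ n * RatFunc.X ^ (n * (n + 1)) * h
end
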